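/- arXiv:2406.06115 — 4 statements merged into one kernel-verified Lean document; each statement's English description precedes it below -/
import Mathlib

section
/- Let s(x) ∈ Ω be a generalized power series such that dim_ℚ ⟨supp s(x) ∪ ℚ⟩_ℚ / ℚ > n. Then s(x) is not a solution of any nontrivial differential equation P(y, y', …, y^{(n)}) = 0 of order n with coefficients in the fraction field of the ring of Puiseux series over ℂ. -/
open Classical Filter

noncomputable section

/-- Support of a coefficient function (set of exponents with nonzero coefficient). -/
def suppG (f : ℝ → ℂ) : Set ℝ := Function.support f

/-- Membership in the field `Ω` of generalized power series: finitely many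
exponents with nonzero coefficient below any bound (exponents tend to `∞`). -/
def OmegaSupp (f : ℝ → ℂ) : Prop := ∀ B : ℝ, {a : ℝ | f a ≠ 0 ∧ a ≤ B}.Finite

/-- The series `1 = x^0`. -/
def oneG : ℝ → ℂ := fun a => if a = 0 then 1 else 0

/-- Multiplication (convolution) of generalized power series. -/
def mulG (f g : ℝ → ℂ) : ℝ → ℂ := fun a => ∑ᶠ b : ℝ, f b * g (a - b)

/-- Powers of a generalized power series. -/
def powG (f : ℝ → ℂ) : ℕ → (ℝ → ℂ)
  | 0 => oneG
  | (k+1) => mulG f (powG f k)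

/-- The monomial `c x^ν`. -/
def monomialG (c : ℂ) (ν : ℝ) : ℝ → ℂ := fun a => if a = ν then c else 0

/-- Generic first-order operator on generalized power series, sending
`x^μ ↦ dd(μ) x^(μ-ε)`.  The ordinary derivative is `dd = id, ε = 1`, the Euler
derivative is `dd = id, ε = 0`, and the `q`-difference operator is
`dd = q^·, ε = 0`. -/
def Dop (dd : ℝ → ℂ) (ε : ℝ) (f : ℝ → ℂ) : ℝ → ℂ := fun a => dd (a + ε) * f (a + ε)

/-- `q^μ` for real `μ`, via a (principal) branch of `log q`. -/
def qpow (q : ℂ) (μ : ℝ) : ℂ := Complex.exp (μ * Complex.log q)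

/-- The operator is one of: ordinary derivative, Euler derivative, or a
`q`-difference operator with `|q| ≠ 1`. -/
def IsAdmissibleOp (dd : ℝ → ℂ) (ε : ℝ) : Prop :=
  ((ε = 1 ∨ ε = 0) ∧ ∀ μ : ℝ, dd μ = (μ : ℂ)) ∨
  (ε = 0 ∧ ∃ q : ℂ, q ≠ 0 ∧ ‖q‖ ≠ 1 ∧ ∀ μ : ℝ, dd μ = qpow q μ)

/-- A polynomial in `y₀, …, y_n` with generalized power series coefficients,
recorded by its coefficient at each multi-exponent `ρ`. -/
abbrev PolyG (n : ℕ) := (Fin (n+1) →₀ ℕ) → (ℝ → ℂ)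

/-- The union of the supports of the coefficients of `P`. -/
def suppP {n : ℕ} (P : PolyG n) : Set ℝ := ⋃ ρ, Function.support (P ρ)

/-- `∏ κ (v κ)^(ρ κ)` as a generalized power series. -/
def prodPow {n : ℕ} (v : Fin (n+1) → (ℝ → ℂ)) (ρ : Fin (n+1) →₀ ℕ) : ℝ → ℂ :=
  (List.ofFn (fun κ : Fin (n+1) => powG (v κ) (ρ κ))).foldr mulG oneG

/-- Evaluation `P(v₀, …, v_n)` of a polynomial at generalized power series. -/
def evalP {n : ℕ} (P : PolyG n) (v : Fin (n+1) → (ℝ → ℂ)) : ℝ → ℂ :=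
  fun a => ∑ᶠ ρ : Fin (n+1) →₀ ℕ, mulG (P ρ) (prodPow v ρ) a

/-- Product of binomial coefficients `∏ κ C((ρ+σ) κ, ρ κ)`. -/
def binomProd {n : ℕ} (ρ σ : Fin (n+1) →₀ ℕ) : ℂ :=
  ∏ κ : Fin (n+1), (Nat.choose ((ρ + σ) κ) (ρ κ) : ℂ)

/-- Full substitution `P[v] = P(v₀ + y₀, …, v_n + y_n)`. -/
def fullSub {n : ℕ} (P : PolyG n) (v : Fin (n+1) → (ℝ → ℂ)) : PolyG n :=
  fun ρ a => ∑ᶠ σ : Fin (n+1) →₀ ℕ, binomProd ρ σ * mulG (P (ρ + σ)) (prodPow v σ) a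

/-- Full substitution of the monomial `c x^ν` and its iterated images under
the operator: `P[c x^ν]`. -/
def subMon {n : ℕ} (dd : ℝ → ℂ) (ε : ℝ) (P : PolyG n) (c : ℂ) (ν : ℝ) : PolyG n :=
  fullSub P (fun κ => (Dop dd ε)^[(κ : ℕ)] (monomialG c ν))

/-- The sequence `P₀ = P`, `P_{i+1} = P_i[c_i x^{ν_i}]`. -/
def seqSub {n : ℕ} (dd : ℝ → ℂ) (ε : ℝ) (P : PolyG n) (c : ℕ → ℂ) (ν : ℕ → ℝ) :
    ℕ → PolyG n
  | 0 => P
  | (i+1) => subMon dd ε (seqSub dd ε P c ν i) (c i) (ν i)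

/-- `|ρ| = ρ₀ + ⋯ + ρ_n`. -/
def totDeg {n : ℕ} (ρ : Fin (n+1) →₀ ℕ) : ℕ := ∑ κ : Fin (n+1), ρ κ

/-- `ω(ρ) = ρ₁ + 2ρ₂ + ⋯ + nρ_n`. -/
def wt {n : ℕ} (ρ : Fin (n+1) →₀ ℕ) : ℕ := ∑ κ : Fin (n+1), (κ : ℕ) * ρ κ

/-- The cloud of points of `P`: `(α, r)` such that some coefficient
`P_{(α,ρ)}` (of `x^{α+εω(ρ)} y^ρ` with `|ρ| = r`) is nonzero. -/
def cloud {n : ℕ} (ε : ℝ) (P : PolyG n) : Set (ℝ × ℕ) :=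
  {p | ∃ ρ : Fin (n+1) →₀ ℕ, totDeg ρ = p.2 ∧ P ρ (p.1 + ε * wt ρ) ≠ 0}

/-- The value `α₀` of the supporting line `μ r + α = α₀` of co-slope `μ`. -/
def lineMin {n : ℕ} (ε : ℝ) (μ : ℝ) (P : PolyG n) : ℝ :=
  sInf ((fun p : ℝ × ℕ => p.1 + μ * p.2) '' cloud ε P)

/-- The cloud points lying on the element `E_μ(P)` of co-slope `μ`. -/
def Eelem {n : ℕ} (ε : ℝ) (μ : ℝ) (P : PolyG n) : Set (ℝ × ℕ) :=
  {p | p ∈ cloud ε P ∧ p.1 + μ * p.2 = lineMin ε μ P}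

/-- Height of `Top(E_μ(P))`. -/
def topHeight {n : ℕ} (ε : ℝ) (μ : ℝ) (P : PolyG n) : ℕ := sSup (Prod.snd '' Eelem ε μ P)

/-- Height of `Bot(E_μ(P))`. -/
def botHeight {n : ℕ} (ε : ℝ) (μ : ℝ) (P : PolyG n) : ℕ := sInf (Prod.snd '' Eelem ε μ P)

/-- The Newton polygon of `P`: the convex envelope of the cloud points
translated by the right half-line. -/
def NPoly {n : ℕ} (ε : ℝ) (P : PolyG n) : Set (ℝ × ℝ) :=
  convexHull ℝ {x : ℝ × ℝ | ∃ p ∈ cloud ε P, ∃ t : ℝ, 0 ≤ t ∧ x = (p.1 + t, (p.2 : ℝ))}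

/-- `⟦μ⟧^(κ)`: the falling factorial `μ(μ-1)⋯(μ-κ+1)` in the ordinary case,
`μ^κ` in the Euler case, `q^{κμ}` in the `q`-difference case. -/
def dmuk (dd : ℝ → ℂ) (ε : ℝ) (μ : ℝ) (κ : ℕ) : ℂ :=
  ∏ i ∈ Finset.range κ, dd (μ - ε * i)

/-- The indicial polynomial `Ψ_{(P;V)}` of `P` at the point `V`, evaluated at
(the value associated with) `μ`. -/
def psiAt {n : ℕ} (dd : ℝ → ℂ) (ε : ℝ) (P : PolyG n) (V : ℝ × ℕ) (μ : ℝ) : ℂ :=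
  ∑ᶠ ρ : Fin (n+1) →₀ ℕ,
    if totDeg ρ = V.2 then
      P ρ (V.1 + ε * wt ρ) * ∏ κ : Fin (n+1), (dmuk dd ε μ (κ : ℕ)) ^ (ρ κ)
    else 0

/-- The characteristic polynomial `Φ_{(P;μ)}` of `P` with respect to the
co-slope `μ`, evaluated at `C`. -/
def phiAt {n : ℕ} (dd : ℝ → ℂ) (ε : ℝ) (P : PolyG n) (μ : ℝ) (C : ℂ) : ℂ :=
  ∑ᶠ h : ℕ, psiAt dd ε P (lineMin ε μ P - μ * h, h) μ * C ^ h

/-- The admissibility (necessary initial conditions) of the generalized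
polynomial `c₀ x^{ν₀} + ⋯ + c_k x^{ν_k}` for `P = 0`. -/
def AdmissibleUpTo {n : ℕ} (dd : ℝ → ℂ) (ε : ℝ) (P : PolyG n) (c : ℕ → ℂ) (ν : ℕ → ℝ)
    (k : ℕ) : Prop :=
  ∀ i ≤ k, phiAt dd ε (seqSub dd ε P c ν i) (ν i) (c i) = 0

/-- The generalized polynomial `c₀ x^{ν₀} + ⋯ + c_k x^{ν_k}` as a series. -/
def rSer (c : ℕ → ℂ) (ν : ℕ → ℝ) (k : ℕ) : ℝ → ℂ :=
  fun a => ∑ i ∈ Finset.range (k+1), if a = ν i then c i else 0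

/-- The series `Σ_{i=0}^∞ c_i x^{ν_i}`. -/
def sSerInf (c : ℕ → ℂ) (ν : ℕ → ℝ) : ℝ → ℂ :=
  fun a => ∑ᶠ i : ℕ, if ν i = a then c i else 0

/-- Partial derivative `∂P/∂y_κ`. -/
def pderivP {n : ℕ} (κ : Fin (n+1)) (P : PolyG n) : PolyG n :=
  fun ρ a => ((ρ κ + 1 : ℕ) : ℂ) * P (ρ + Finsupp.single κ 1) a

/-- Order of a series (`⊤` for the zero series). -/
def ordG (f : ℝ → ℂ) : WithTop ℝ := if f = 0 then ⊤ else (sInf (Function.support f) : ℝ)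

/-- `dim_ℚ ⟨A ∪ B⟩_ℚ / ⟨B⟩_ℚ` as a cardinal. -/
def rankQuot (A B : Set ℝ) : Cardinal :=
  Module.rank ℚ
    (↥(Submodule.span ℚ (A ∪ B)) ⧸
      Submodule.comap (Submodule.span ℚ (A ∪ B)).subtype (Submodule.span ℚ B))

end


noncomputable section


namespace S6

abbrev K := HahnSeries ℝ ℂ

lemma omegaSupp_isPWO {f : ℝ → ℂ} (hf : OmegaSupp f) : (Function.support f).IsPWO := by
  refine Set.IsWF.isPWO ?_
  rw [Set.isWF_iff_no_descending_seq]
  intro g hg hmem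
  have hfin : {a : ℝ | f a ≠ 0 ∧ a ≤ g 0}.Finite := hf (g 0)
  have hinj : Function.Injective g := hg.injective
  have hsub : Set.range g ⊆ {a : ℝ | f a ≠ 0 ∧ a ≤ g 0} := by
    rintro _ ⟨k, rfl⟩
    exact ⟨hmem k, hg.antitone (Nat.zero_le k)⟩
  exact Set.infinite_range_of_injective hinj (hfin.subset hsub)

/-- Build a Hahn series from an Omega-supported coefficient function. -/
def toH (f : ℝ → ℂ) (hf : OmegaSupp f) : K := ⟨f, omegaSupp_isPWO hf⟩

@[simp] lemma toH_coeff (f : ℝ → ℂ) (hf : OmegaSupp f) : (toH f hf).coeff = f := rfl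

lemma omegaSupp_lower {f : ℝ → ℂ} (hf : OmegaSupp f) :
    ∃ m : ℝ, ∀ b, f b ≠ 0 → m ≤ b := by
  by_cases h : ∃ b, f b ≠ 0
  · obtain ⟨b₀, hb₀⟩ := h
    have hfin := hf b₀
    set T := hfin.toFinset with hT
    have hne : T.Nonempty := ⟨b₀, by simp [hT, hb₀]⟩
    refine ⟨T.min' hne, fun b hb => ?_⟩
    by_cases hle : b ≤ b₀
    · exact T.min'_le b (by simp [hT, hb, hle])
    · exact le_trans (T.min'_le b₀ (by simp [hT, hb₀])) (le_of_not_ge hle)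
  · push_neg at h
    exact ⟨0, fun b hb => absurd (h b) hb⟩

lemma omegaSupp_coeff_zero : OmegaSupp ((0 : K).coeff) := by
  intro B; simp

lemma omegaSupp_of_support_subset {f g : ℝ → ℂ} (hf : OmegaSupp f)
    (h : Function.support g ⊆ Function.support f) : OmegaSupp g := by
  intro B
  refine (hf B).subset ?_
  rintro a ⟨ha, haB⟩
  exact ⟨h ha, haB⟩

end S6

noncomputable section


namespace S6

open Pointwise in
lemma omegaSupp_mul {F G : K} (hF : OmegaSupp F.coeff) (hG : OmegaSupp G.coeff) :
    OmegaSupp ((F * G).coeff) := by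
  intro B
  obtain ⟨mF, hmF⟩ := omegaSupp_lower hF
  obtain ⟨mG, hmG⟩ := omegaSupp_lower hG
  refine ((hF (B - mG)).image2 (· + ·) (hG (B - mF))).subset ?_
  rintro a ⟨ha, haB⟩
  have hmem : a ∈ F.support + G.support :=
    HahnSeries.support_mul_subset (x := F) (y := G) ha
  rw [Set.mem_add] at hmem
  obtain ⟨x, hx, y, hy, hxy⟩ := hmem
  refine ⟨x, ⟨hx, ?_⟩, y, ⟨hy, ?_⟩, hxy⟩
  · have := hmG y hy
    linarith
  · have := hmF x hx
    linarith

lemma mul_coeff_eq_mulG (F G : K) (hF : OmegaSupp F.coeff) (hG : OmegaSupp G.coeff) (a : ℝ) :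
    (F * G).coeff a = mulG F.coeff G.coeff a := by
  classical
  have hSsub : Function.support (fun b => F.coeff b * G.coeff (a - b)) ⊆
      Prod.fst '' ((Finset.antidiagonal F.isPWO_support G.isPWO_support a : Finset (ℝ × ℝ)) : Set (ℝ × ℝ)) := by
    intro b hb
    have h1 : F.coeff b ≠ 0 := fun h => hb (by simp [h])
    have h2 : G.coeff (a - b) ≠ 0 := fun h => hb (by simp [h])
    exact ⟨(b, a - b), by rw [Finset.mem_coe, Finset.mem_addAntidiagonal]; exact ⟨h1, h2, by ring⟩, rfl⟩
  have hS : (Function.support (fun b => F.coeff b * G.coeff (a - b))).Finite :=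
    Set.Finite.subset (Set.Finite.image _ (Finset.finite_toSet _)) hSsub
  rw [HahnSeries.coeff_mul, mulG, finsum_eq_sum _ hS]
  refine Finset.sum_nbij' (i := fun ij => ij.1) (j := fun b => (b, a - b)) ?_ ?_ ?_ ?_ ?_
  · intro ij hij
    rw [Finset.mem_addAntidiagonal] at hij
    rw [Set.Finite.mem_toFinset, Function.mem_support]
    have : a - ij.1 = ij.2 := by have := hij.2.2; linarith
    rw [this]
    exact mul_ne_zero hij.1 hij.2.1
  · intro b hb
    rw [Set.Finite.mem_toFinset, Function.mem_support] at hb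
    have h1 : F.coeff b ≠ 0 := fun h => hb (by simp [h])
    have h2 : G.coeff (a - b) ≠ 0 := fun h => hb (by simp [h])
    simp [Finset.mem_addAntidiagonal, h1, h2, Function.mem_support, HahnSeries.mem_support]
  · intro ij hij
    rw [Finset.mem_addAntidiagonal] at hij
    have : a - ij.1 = ij.2 := by have := hij.2.2; linarith
    exact Prod.ext rfl this
  · intro b _; rfl
  · intro ij hij
    rw [Finset.mem_addAntidiagonal] at hij
    have : a - ij.1 = ij.2 := by have := hij.2.2; linarith
    rw [this]

lemma one_coeff_eq_oneG : (1 : K).coeff = oneG := by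
  funext a
  rw [HahnSeries.coeff_one]
  rfl

lemma omegaSupp_one : OmegaSupp ((1 : K).coeff) := by
  intro B
  refine (Set.finite_singleton (0:ℝ)).subset ?_
  rintro a ⟨ha, -⟩
  rw [HahnSeries.coeff_one] at ha
  by_contra h
  rw [if_neg (by simpa using h)] at ha
  exact ha rfl
end S6
end

noncomputable section

namespace S6

def delH (l : ℝ → ℂ) (F : K) : K :=
  ⟨fun a => l a * F.coeff a, (F.isPWO_support.mono (by
    intro a ha
    have ha' : l a * F.coeff a ≠ 0 := ha
    show F.coeff a ≠ 0
    exact fun h => ha' (by rw [h, mul_zero])))⟩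

@[simp] lemma delH_coeff (l : ℝ → ℂ) (F : K) (a : ℝ) : (delH l F).coeff a = l a * F.coeff a := rfl

lemma delH_support_subset (l : ℝ → ℂ) (F : K) : (delH l F).support ⊆ F.support := by
  intro a ha
  have ha' : l a * F.coeff a ≠ 0 := ha
  show F.coeff a ≠ 0
  exact fun h => ha' (by simp [h])

lemma delH_add (l : ℝ → ℂ) (F G : K) : delH l (F + G) = delH l F + delH l G := by
  ext a
  simp [mul_add]

lemma delH_mul {l : ℝ → ℂ} (hl : ∀ x y, l (x + y) = l x + l y) (F G : K) :
    delH l (F * G) = delH l F * G + F * delH l G := by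
  ext a
  rw [HahnSeries.coeff_add,
    HahnSeries.coeff_mul_left' F.isPWO_support (delH_support_subset l F),
    HahnSeries.coeff_mul_right' G.isPWO_support (delH_support_subset l G),
    delH_coeff, HahnSeries.coeff_mul, Finset.mul_sum, ← Finset.sum_add_distrib]
  refine Finset.sum_congr rfl ?_
  intro ij hij
  rw [Finset.mem_addAntidiagonal] at hij
  rw [delH_coeff, delH_coeff, ← hij.2.2, hl]
  ring

def Dx (F : K) : K := HahnSeries.single (-1 : ℝ) (1 : ℂ) * delH (fun a => (a : ℂ)) F

lemma Dx_coeff (F : K) (a : ℝ) : (Dx F).coeff a = (a + 1 : ℝ) * F.coeff (a + 1) := by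
  have h : a = (a + 1) + (-1) := by ring
  rw [Dx, h, HahnSeries.coeff_single_mul_add, delH_coeff]
  push_cast
  ring

lemma Dx_add (F G : K) : Dx (F + G) = Dx F + Dx G := by
  rw [Dx, Dx, Dx, delH_add, mul_add]

lemma Dx_mul (F G : K) : Dx (F * G) = Dx F * G + F * Dx G := by
  rw [Dx, Dx, Dx, delH_mul (by intro x y; push_cast; ring)]
  ring

lemma delH_Dx_comm {l : ℝ → ℂ} (h1 : ∀ a : ℝ, l (a + 1) = l a) (F : K) :
    delH l (Dx F) = Dx (delH l F) := by
  ext a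
  rw [delH_coeff, Dx_coeff, Dx_coeff, delH_coeff, h1]
  ring

lemma delH_eq_zero {l : ℝ → ℂ} {F : K} (h : ∀ a, F.coeff a ≠ 0 → l a = 0) :
    delH l F = 0 := by
  ext a
  rw [delH_coeff, HahnSeries.coeff_zero]
  by_cases hFa : F.coeff a = 0
  · rw [hFa, mul_zero]
  · rw [h a hFa, zero_mul]

lemma Dx_const {F : K} (h : Dx F = 0) : F = HahnSeries.single (0 : ℝ) (F.coeff 0) := by
  ext b
  rw [HahnSeries.coeff_single]
  by_cases hb : b = 0
  · rw [if_pos hb, hb]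
  · rw [if_neg hb]
    have := congrArg (fun G => HahnSeries.coeff G (b - 1)) h
    simp only [Dx_coeff, HahnSeries.coeff_zero] at this
    rw [sub_add_cancel] at this
    rcases mul_eq_zero.mp this with h' | h'
    · exfalso
      apply hb
      have : (b : ℂ) = 0 := by push_cast at h' ⊢; linear_combination h'
      exact_mod_cast this
    · exact h'

lemma omegaSupp_delH (l : ℝ → ℂ) {F : K} (hF : OmegaSupp F.coeff) :
    OmegaSupp ((delH l F).coeff) := by
  refine omegaSupp_of_support_subset hF ?_
  exact delH_support_subset l F

lemma omegaSupp_Dx {F : K} (hF : OmegaSupp F.coeff) : OmegaSupp ((Dx F).coeff) := by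
  intro B
  have hinj : Set.InjOn (fun a : ℝ => a + 1) {a : ℝ | (Dx F).coeff a ≠ 0 ∧ a ≤ B} := by
    intro x _ y _ h
    simpa using h
  refine Set.Finite.of_finite_image ?_ hinj
  refine (hF (B + 1)).subset ?_
  rintro b ⟨a, ⟨ha, haB⟩, rfl⟩
  rw [Dx_coeff] at ha
  refine ⟨fun h => ha (by rw [h, mul_zero]), ?_⟩
  show a + 1 ≤ B + 1
  linarith

lemma Dx_coeff_eq_Dop (F : K) : (Dx F).coeff = Dop (fun a => (a : ℂ)) 1 F.coeff := by
  funext a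
  rw [Dx_coeff, Dop]

lemma Dx_iter_bridge (F : K) (hF : OmegaSupp F.coeff) (k : ℕ) :
    OmegaSupp ((Dx^[k] F).coeff) ∧
      (Dx^[k] F).coeff = (Dop (fun a => (a : ℂ)) 1)^[k] F.coeff := by
  induction k with
  | zero => exact ⟨hF, rfl⟩
  | succ k ih =>
    rw [Function.iterate_succ_apply', Function.iterate_succ_apply']
    exact ⟨omegaSupp_Dx ih.1, by rw [Dx_coeff_eq_Dop, ih.2]⟩

end S6
end

noncomputable section




namespace S6

lemma pow_bridge (F : K) (hF : OmegaSupp F.coeff) (k : ℕ) :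
    OmegaSupp ((F ^ k).coeff) ∧ (F ^ k).coeff = powG F.coeff k := by
  induction k with
  | zero =>
    rw [pow_zero]
    exact ⟨omegaSupp_one, one_coeff_eq_oneG⟩
  | succ k ih =>
    rw [pow_succ']
    refine ⟨omegaSupp_mul hF ih.1, ?_⟩
    funext a
    rw [mul_coeff_eq_mulG F (F ^ k) hF ih.1, show powG F.coeff (k+1) = mulG F.coeff (powG F.coeff k) from rfl, ih.2]

lemma list_bridge (l : List K) (h : ∀ F ∈ l, OmegaSupp F.coeff) :
    OmegaSupp l.prod.coeff ∧ l.prod.coeff = (l.map HahnSeries.coeff).foldr mulG oneG := by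
  induction l with
  | nil =>
    simp only [List.prod_nil, List.map_nil, List.foldr_nil]
    exact ⟨omegaSupp_one, one_coeff_eq_oneG⟩
  | cons F l ih =>
    have hF : OmegaSupp F.coeff := h F List.mem_cons_self
    have hl := ih (fun G hG => h G (List.mem_cons_of_mem F hG))
    rw [List.prod_cons, List.map_cons, List.foldr_cons]
    refine ⟨omegaSupp_mul hF hl.1, ?_⟩
    funext a
    rw [mul_coeff_eq_mulG F l.prod hF hl.1, hl.2]

lemma prod_bridge {n : ℕ} (v : Fin (n+1) → K) (hv : ∀ κ, OmegaSupp (v κ).coeff)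
    (ρ : Fin (n+1) →₀ ℕ) :
    OmegaSupp ((∏ κ, v κ ^ ρ κ).coeff) ∧
      (∏ κ, v κ ^ ρ κ).coeff = prodPow (fun κ => (v κ).coeff) ρ := by
  have hprod : (∏ κ, v κ ^ ρ κ) = (List.ofFn (fun κ => v κ ^ ρ κ)).prod := by
    rw [List.prod_ofFn]
  have hmem : ∀ F ∈ List.ofFn (fun κ => v κ ^ ρ κ), OmegaSupp F.coeff := by
    intro F hF
    rw [List.mem_ofFn] at hF
    obtain ⟨κ, rfl⟩ := hF
    exact (pow_bridge (v κ) (hv κ) (ρ κ)).1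
  obtain ⟨h1, h2⟩ := list_bridge _ hmem
  rw [← hprod] at h1 h2
  refine ⟨h1, ?_⟩
  rw [h2, prodPow]
  congr 1
  rw [List.map_ofFn]
  congr 1
  funext κ
  exact (pow_bridge (v κ) (hv κ) (ρ κ)).2

lemma sum_coeff {ι : Type*} (T : Finset ι) (f : ι → K) (a : ℝ) :
    (∑ i ∈ T, f i).coeff a = ∑ i ∈ T, (f i).coeff a := by
  classical
  induction T using Finset.induction with
  | empty => simp
  | insert x T hx ih => rw [Finset.sum_insert hx, Finset.sum_insert hx, HahnSeries.coeff_add, ih]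

lemma toH_zero (hm : OmegaSupp (0 : ℝ → ℂ)) : toH 0 hm = 0 := by
  ext a
  rfl

lemma mulG_zero_left (g : ℝ → ℂ) (a : ℝ) : mulG 0 g a = 0 := by
  rw [mulG]
  simp

/-- `P` as an MvPolynomial over the Hahn series field. -/
def toMv {n : ℕ} (P : PolyG n) (hfin : (Function.support P).Finite)
    (hOm : ∀ ρ, OmegaSupp (P ρ)) : MvPolynomial (Fin (n+1)) K :=
  ∑ ρ ∈ hfin.toFinset, MvPolynomial.monomial ρ (toH (P ρ) (hOm ρ))

lemma toMv_coeff {n : ℕ} (P : PolyG n) (hfin : (Function.support P).Finite)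
    (hOm : ∀ ρ, OmegaSupp (P ρ)) (ρ : Fin (n+1) →₀ ℕ) :
    (toMv P hfin hOm).coeff ρ = toH (P ρ) (hOm ρ) := by
  classical
  rw [toMv, MvPolynomial.coeff_sum]
  simp only [MvPolynomial.coeff_monomial]
  rw [Finset.sum_ite_eq' hfin.toFinset ρ (fun ρ' => toH (P ρ') (hOm ρ'))]
  by_cases h : ρ ∈ hfin.toFinset
  · rw [if_pos h]
  · rw [if_neg h]
    rw [Set.Finite.mem_toFinset, Function.mem_support, not_not] at h
    ext a
    rw [HahnSeries.coeff_zero, toH_coeff, h]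
    rfl

set_option synthInstance.maxHeartbeats 1000000 in
lemma evalP_bridge {n : ℕ} (P : PolyG n) (hfin : (Function.support P).Finite)
    (hOm : ∀ ρ, OmegaSupp (P ρ)) (v : Fin (n+1) → K) (hv : ∀ κ, OmegaSupp (v κ).coeff)
    (a : ℝ) :
    (MvPolynomial.eval v (toMv P hfin hOm)).coeff a = evalP P (fun κ => (v κ).coeff) a := by
  classical
  rw [toMv, map_sum]
  have hterm : ∀ ρ, MvPolynomial.eval v (MvPolynomial.monomial ρ (toH (P ρ) (hOm ρ)))
      = toH (P ρ) (hOm ρ) * ∏ κ, v κ ^ ρ κ := by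
    intro ρ
    rw [MvPolynomial.eval_monomial]
    congr 1
    exact Finsupp.prod_fintype ρ _ (fun κ => pow_zero (v κ))
  rw [Finset.sum_congr rfl (fun ρ _ => hterm ρ), sum_coeff]
  have hterm2 : ∀ ρ, (toH (P ρ) (hOm ρ) * ∏ κ, v κ ^ ρ κ).coeff a
      = mulG (P ρ) (prodPow (fun κ => (v κ).coeff) ρ) a := by
    intro ρ
    obtain ⟨h1, h2⟩ := prod_bridge v hv ρ
    rw [mul_coeff_eq_mulG _ _ (hOm ρ) h1, toH_coeff, h2]
  rw [Finset.sum_congr rfl (fun ρ _ => hterm2 ρ), evalP]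
  rw [finsum_eq_sum_of_support_subset]
  intro ρ hρ
  rw [Function.mem_support] at hρ
  rw [Set.Finite.coe_toFinset, Function.mem_support]
  intro h
  apply hρ
  rw [h, mulG_zero_left]

end S6
end

noncomputable section
namespace S6

open MvPolynomial

section ChainRule

variable {m : ℕ} (D : K → K)

lemma D_zero (hadd : ∀ x y, D (x + y) = D x + D y) : D 0 = 0 := by
  have := hadd 0 0
  rw [add_zero] at this
  exact (left_eq_add.mp this)

lemma D_one (hmul : ∀ x y, D (x * y) = D x * y + x * D y) : D 1 = 0 := by
  have h := hmul 1 1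
  rw [mul_one, one_mul, mul_one] at h
  exact (add_left_cancel (show D 1 + 0 = D 1 + D 1 by rw [add_zero, ← h])).symm

lemma D_natCast (hadd : ∀ x y, D (x + y) = D x + D y)
    (hmul : ∀ x y, D (x * y) = D x * y + x * D y) (k : ℕ) : D (k : K) = 0 := by
  induction k with
  | zero => rw [Nat.cast_zero]; exact D_zero D hadd
  | succ k ih =>
    push_cast
    rw [hadd, ih, D_one D hmul, add_zero]

lemma D_sum (hadd : ∀ x y, D (x + y) = D x + D y) {ι : Type*} (T : Finset ι) (f : ι → K) :
    D (∑ i ∈ T, f i) = ∑ i ∈ T, D (f i) := by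
  classical
  induction T using Finset.induction with
  | empty => simpa using D_zero D hadd
  | insert x T hx ih => rw [Finset.sum_insert hx, Finset.sum_insert hx, hadd, ih]

/-- Apply `D` to each coefficient. -/
def mapC (Q : MvPolynomial (Fin (m+1)) K) : MvPolynomial (Fin (m+1)) K :=
  ∑ ρ ∈ Q.support, monomial ρ (D (Q.coeff ρ))

lemma coeff_mapC (hadd : ∀ x y, D (x + y) = D x + D y) (Q : MvPolynomial (Fin (m+1)) K)
    (σ : Fin (m+1) →₀ ℕ) : (mapC D Q).coeff σ = D (Q.coeff σ) := by
  classical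
  rw [mapC, coeff_sum]
  simp only [coeff_monomial]
  rw [Finset.sum_ite_eq' Q.support σ (fun ρ => D (Q.coeff ρ))]
  by_cases h : σ ∈ Q.support
  · rw [if_pos h]
  · rw [if_neg h]
    rw [MvPolynomial.notMem_support_iff] at h
    rw [h, D_zero D hadd]

set_option synthInstance.maxHeartbeats 1000000 in
lemma chainRule (hadd : ∀ x y, D (x + y) = D x + D y)
    (hmul : ∀ x y, D (x * y) = D x * y + x * D y)
    (v : Fin (m+1) → K) (Q : MvPolynomial (Fin (m+1)) K) :
    D (eval v Q) = eval v (mapC D Q) + ∑ κ, eval v (pderiv κ Q) * D (v κ) := by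
  classical
  induction Q using MvPolynomial.induction_on with
  | C c =>
    have h1 : mapC D (C c : MvPolynomial (Fin (m+1)) K) = C (D c) := by
      apply MvPolynomial.ext
      intro σ
      rw [coeff_mapC D hadd, coeff_C, coeff_C]
      split
      · rfl
      · exact D_zero D hadd
    simp [h1, pderiv_C]
  | add p q ihp ihq =>
    have h1 : mapC D (p + q) = mapC D p + mapC D q := by
      apply MvPolynomial.ext
      intro σ
      rw [coeff_mapC D hadd, coeff_add, coeff_add, coeff_mapC D hadd, coeff_mapC D hadd, hadd]
    rw [map_add, hadd, ihp, ihq, h1, map_add]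
    rw [Finset.sum_congr rfl (fun κ _ => by rw [map_add, map_add, add_mul] :
      ∀ κ ∈ Finset.univ, eval v (pderiv κ (p + q)) * D (v κ) =
        eval v (pderiv κ p) * D (v κ) + eval v (pderiv κ q) * D (v κ))]
    rw [Finset.sum_add_distrib]
    ring
  | mul_X p i ih =>
    have h1 : mapC D (p * X i) = mapC D p * X i := by
      apply MvPolynomial.ext
      intro σ
      rw [coeff_mapC D hadd, coeff_mul_X', coeff_mul_X']
      split
      · rw [coeff_mapC D hadd]
      · exact D_zero D hadd
    have h2 : ∀ κ, pderiv κ (p * X i) = pderiv κ p * X i + p * pderiv κ (X i) := by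
      intro κ
      rw [pderiv_mul]
    rw [map_mul, hmul, ih, eval_X, h1, map_mul, eval_X]
    have h3 : ∑ κ, eval v (pderiv κ (p * X i)) * D (v κ)
        = (∑ κ, eval v (pderiv κ p) * D (v κ)) * v i + eval v p * D (v i) := by
      rw [Finset.sum_congr rfl (fun κ _ => by rw [h2 κ, map_add, map_mul, map_mul, eval_X, add_mul] :
        ∀ κ ∈ Finset.univ, eval v (pderiv κ (p * X i)) * D (v κ) =
          eval v (pderiv κ p) * v i * D (v κ) + eval v p * eval v (pderiv κ (X i)) * D (v κ))]
      rw [Finset.sum_add_distrib, Finset.sum_mul]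
      congr 1
      · exact Finset.sum_congr rfl (fun κ _ => by ring)
      · rw [Finset.sum_eq_single i]
        · rw [pderiv_X_self, map_one, mul_one]
        · intro κ _ hκ
          rw [pderiv_X_of_ne (Ne.symm hκ), map_zero, mul_zero, zero_mul]
        · intro h; exact absurd (Finset.mem_univ i) h
    rw [h3]
    ring

end ChainRule

end S6
end

noncomputable section
namespace S6
open MvPolynomial

lemma natCast_coeff_zero (k : ℕ) : (k : K).coeff 0 = (k : ℂ) := by
  rw [show (k : K) = HahnSeries.C (k : ℂ) from (map_natCast (HahnSeries.C : ℂ →+* K) k).symm]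
  rw [HahnSeries.C_apply, HahnSeries.coeff_single_same]

instance : CharZero K := by
  refine ⟨fun a b h => ?_⟩
  have := congrArg (fun F : K => F.coeff 0) h
  simp only [natCast_coeff_zero] at this
  exact_mod_cast this

variable {m : ℕ}

lemma coeff_pderiv (κ : Fin (m+1)) (Q : MvPolynomial (Fin (m+1)) K) (σ : Fin (m+1) →₀ ℕ) :
    (pderiv κ Q).coeff σ =
      ∑ ρ ∈ Q.support, (if ρ - Finsupp.single κ 1 = σ then Q.coeff ρ * ((ρ κ : ℕ) : K) else 0) := by
  conv_lhs => rw [Q.as_sum]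
  rw [map_sum, coeff_sum]
  refine Finset.sum_congr rfl ?_
  intro ρ _
  rw [pderiv_monomial, coeff_monomial]

lemma degF_eq (ρ : Fin (m+1) →₀ ℕ) : (ρ.sum fun _ e => e) = ∑ κ, ρ κ :=
  Finsupp.sum_fintype _ _ (fun _ => rfl)

lemma support_pderiv {κ : Fin (m+1)} {Q : MvPolynomial (Fin (m+1)) K} {σ : Fin (m+1) →₀ ℕ}
    (h : σ ∈ (pderiv κ Q).support) :
    ∃ ρ ∈ Q.support, ρ κ ≠ 0 ∧ σ = ρ - Finsupp.single κ 1 := by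
  rw [mem_support_iff, coeff_pderiv] at h
  obtain ⟨ρ, hρ, hne⟩ := Finset.exists_ne_zero_of_sum_ne_zero h
  by_cases hc : ρ - Finsupp.single κ 1 = σ
  · rw [if_pos hc] at hne
    refine ⟨ρ, hρ, ?_, hc.symm⟩
    intro h0
    rw [h0] at hne
    simp at hne
  · rw [if_neg hc] at hne
    exact absurd rfl hne

lemma sub_single_sum {ρ : Fin (m+1) →₀ ℕ} {κ : Fin (m+1)} (hκ : ρ κ ≠ 0) :
    (∑ κ', ((ρ - Finsupp.single κ 1 : Fin (m+1) →₀ ℕ)) κ') + 1 = ∑ κ', ρ κ' := by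
  rw [Finset.sum_eq_sum_sdiff_singleton_add (Finset.mem_univ κ) (fun κ' => ((ρ - Finsupp.single κ 1 : Fin (m+1) →₀ ℕ)) κ'),
     Finset.sum_eq_sum_sdiff_singleton_add (Finset.mem_univ κ) (fun κ' => ρ κ')]
  have h1 : ∀ κ' ∈ Finset.univ \ {κ}, ((ρ - Finsupp.single κ 1 : Fin (m+1) →₀ ℕ)) κ' = ρ κ' := by
    intro κ' hκ'
    rw [Finset.mem_sdiff, Finset.mem_singleton] at hκ'
    rw [Finsupp.tsub_apply, Finsupp.single_apply, if_neg (Ne.symm hκ'.2), Nat.sub_zero]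
  rw [Finset.sum_congr rfl h1, Finsupp.tsub_apply, Finsupp.single_apply, if_pos rfl]
  have hee : ∑ x ∈ Finset.univ \ {κ}, ρ x = (Finset.univ \ {κ}).sum ⇑ρ := rfl
  rw [hee]
  omega

lemma totalDegree_pderiv_lt (κ : Fin (m+1)) (Q : MvPolynomial (Fin (m+1)) K)
    (h : 1 ≤ Q.totalDegree) : (pderiv κ Q).totalDegree < Q.totalDegree := by
  have hle : (pderiv κ Q).totalDegree ≤ Q.totalDegree - 1 := by
    rw [totalDegree]
    refine Finset.sup_le ?_
    intro σ hσ
    obtain ⟨ρ, hρ, hκ0, rfl⟩ := support_pderiv hσ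
    have h1 := sub_single_sum (ρ := ρ) (κ := κ) hκ0
    have h2 : (ρ.sum fun _ e => e) ≤ Q.totalDegree := le_totalDegree hρ
    rw [degF_eq] at h2
    rw [degF_eq]
    omega
  omega

lemma pderiv_ne_zero {κ : Fin (m+1)} {Q : MvPolynomial (Fin (m+1)) K} {ρ : Fin (m+1) →₀ ℕ}
    (hρ : ρ ∈ Q.support) (hκ : ρ κ ≠ 0) : pderiv κ Q ≠ 0 := by
  intro h0
  have hco : (pderiv κ Q).coeff (ρ - Finsupp.single κ 1) = Q.coeff ρ * ((ρ κ : ℕ) : K) := by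
    rw [coeff_pderiv]
    rw [Finset.sum_eq_single ρ]
    · rw [if_pos rfl]
    · intro ρ' hρ' hne
      by_cases hc : ρ' - Finsupp.single κ 1 = ρ - Finsupp.single κ 1
      · rw [if_pos hc]
        by_cases hκ' : ρ' κ = 0
        · rw [hκ', Nat.cast_zero, mul_zero]
        · exfalso
          apply hne
          ext κ'
          have e1 := congrArg (fun f : Fin (m+1) →₀ ℕ => f κ') hc
          simp only [Finsupp.tsub_apply, Finsupp.single_apply] at e1
          by_cases hc' : κ = κ'
          · rw [if_pos hc'] at e1
            subst hc'
            omega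
          · rw [if_neg hc'] at e1
            omega
      · rw [if_neg hc]
    · intro h; exact absurd hρ h
  rw [h0] at hco
  simp only [coeff_zero] at hco
  have := mul_ne_zero (mem_support_iff.mp hρ) (Nat.cast_ne_zero.mpr hκ : ((ρ κ : ℕ) : K) ≠ 0)
  exact this hco.symm

end S6
end

noncomputable section
namespace S6

lemma D_neg (D : K → K) (hadd : ∀ x y, D (x + y) = D x + D y) (x : K) : D (-x) = - D x := by
  have h := hadd x (-x)
  rw [add_neg_cancel, D_zero D hadd] at h
  linear_combination -h

lemma wronskian_dep (D : K → K) (hadd : ∀ x y, D (x + y) = D x + D y)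
    (hmul : ∀ x y, D (x * y) = D x * y + x * D y) :
    ∀ (m : ℕ) (u : Fin m → K),
      (Matrix.of fun j i : Fin m => D^[(j : ℕ)] (u i)).det = 0 →
      ∃ c : Fin m → K, c ≠ 0 ∧ (∀ i, D (c i) = 0) ∧ ∑ i, c i * u i = 0 := by
  intro m
  induction m with
  | zero =>
    intro u h
    rw [Matrix.det_fin_zero] at h
    exact absurd h one_ne_zero
  | succ m ih =>
    intro u hdet
    classical
    by_cases hW' : (Matrix.of fun j i : Fin m => D^[(j : ℕ)] (u (Fin.castSucc i))).det = 0
    · obtain ⟨c', hc0, hcD, hcsum⟩ := ih (fun i => u (Fin.castSucc i)) hW'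
      refine ⟨Fin.snoc c' 0, ?_, ?_, ?_⟩
      · intro h
        apply hc0
        funext i
        have := congrFun h (Fin.castSucc i)
        rw [Fin.snoc_castSucc] at this
        exact this
      · intro i
        refine Fin.lastCases ?_ ?_ i
        · rw [Fin.snoc_last]
          exact D_zero D hadd
        · intro i'
          rw [Fin.snoc_castSucc]
          exact hcD i'
      · rw [Fin.sum_univ_castSucc]
        simp only [Fin.snoc_castSucc, Fin.snoc_last, zero_mul, add_zero]
        exact hcsum
    · obtain ⟨c, hc0, hc⟩ := Matrix.exists_mulVec_eq_zero_iff.mpr hdet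
      have hcrel : ∀ j : Fin (m+1), ∑ i, D^[(j : ℕ)] (u i) * c i = 0 := by
        intro j
        have := congrFun hc j
        simpa [Matrix.mulVec, dotProduct] using this
      have hlast : c (Fin.last m) ≠ 0 := by
        intro hl
        apply hW'
        rw [← Matrix.exists_mulVec_eq_zero_iff]
        refine ⟨fun i => c (Fin.castSucc i), ?_, ?_⟩
        · intro h
          apply hc0
          funext i
          refine Fin.lastCases hl ?_ i
          intro i'
          exact congrFun h i'
        · funext j
          have h0 := hcrel (Fin.castSucc j)
          rw [Fin.sum_univ_castSucc, hl, mul_zero, add_zero] at h0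
          simpa [Matrix.mulVec, dotProduct] using h0
      set a : Fin m → K := fun i => - c (Fin.castSucc i) / c (Fin.last m) with ha
      have hrel : ∀ j : ℕ, j ≤ m →
          D^[j] (u (Fin.last m)) = ∑ i, a i * D^[j] (u (Fin.castSucc i)) := by
        intro j hj
        have h0 := hcrel ⟨j, by omega⟩
        rw [Fin.sum_univ_castSucc] at h0
        simp only [Fin.val_mk] at h0
        have hx : D^[j] (u (Fin.last m)) =
            (- ∑ i, D^[j] (u (Fin.castSucc i)) * c (Fin.castSucc i)) / c (Fin.last m) := by
          rw [eq_div_iff hlast]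
          linear_combination h0
        rw [hx, div_eq_iff hlast, Finset.sum_mul, ← Finset.sum_neg_distrib]
        refine Finset.sum_congr rfl fun i _ => ?_
        simp only [ha]
        field_simp
      have hstep : ∀ j : ℕ, j < m → ∑ i, D^[(j : ℕ)] (u (Fin.castSucc i)) * D (a i) = 0 := by
        intro j hj
        have e1 := hrel j (by omega)
        have e2 := hrel (j+1) (by omega)
        have e3 := congrArg D e1
        rw [D_sum D hadd] at e3
        have e4 : ∀ i, D (a i * D^[j] (u (Fin.castSucc i))) =
            D (a i) * D^[j] (u (Fin.castSucc i)) + a i * D^[(j+1)] (u (Fin.castSucc i)) := by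
          intro i
          rw [hmul, Function.iterate_succ_apply']
        rw [Finset.sum_congr rfl (fun i _ => e4 i), Finset.sum_add_distrib,
          ← Function.iterate_succ_apply' D j] at e3
        simp only [Nat.succ_eq_add_one] at e3
        have e5 : ∑ i, D^[(j : ℕ)] (u (Fin.castSucc i)) * D (a i)
            = ∑ i, D (a i) * D^[(j : ℕ)] (u (Fin.castSucc i)) :=
          Finset.sum_congr rfl fun i _ => mul_comm _ _
        rw [e5]
        linear_combination e2 - e3
      have hDa : ∀ i, D (a i) = 0 := by
        by_contra hne
        push_neg at hne
        apply hW'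
        rw [← Matrix.exists_mulVec_eq_zero_iff]
        refine ⟨fun i => D (a i), ?_, ?_⟩
        · intro h
          obtain ⟨i, hi⟩ := hne
          exact hi (congrFun h i)
        · funext j
          have := hstep (j : ℕ) j.isLt
          simpa [Matrix.mulVec, dotProduct] using this
      refine ⟨Fin.snoc a (-1), ?_, ?_, ?_⟩
      · intro h
        have := congrFun h (Fin.last m)
        rw [Fin.snoc_last] at this
        exact (by norm_num : (-1 : K) ≠ 0) this
      · intro i
        refine Fin.lastCases ?_ ?_ i
        · rw [Fin.snoc_last]
          rw [show (-1 : K) = -(1 : K) by norm_num, D_neg D hadd, D_one D hmul, neg_zero]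
        · intro i'
          rw [Fin.snoc_castSucc]
          exact hDa i'
      · rw [Fin.sum_univ_castSucc]
        simp only [Fin.snoc_castSucc, Fin.snoc_last]
        have h00 := hrel 0 (by omega)
        simp only [Function.iterate_zero, id_eq] at h00
        rw [h00]
        ring

end S6
end

noncomputable section

namespace S6

lemma exists_dual_family (n : ℕ) (A B : Set ℝ)
    (hrank : (n : Cardinal) < rankQuot A B) :
    ∃ (l : Fin (n+1) → (ℝ →ₗ[ℚ] ℚ)) (γ : Fin (n+1) → ℝ),
      (∀ i, ∀ b ∈ B, l i b = 0) ∧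
      (∀ j, γ j ∈ Submodule.span ℚ (A ∪ B)) ∧
      (∀ i j, l i (γ j) = if i = j then 1 else 0) := by
  classical
  set W := Submodule.span ℚ (A ∪ B) with hW
  set N := Submodule.comap W.subtype (Submodule.span ℚ B) with hN
  set V := (↥W ⧸ N) with hV
  -- get n+1 independent vectors in the quotient
  have hle : ((n + 1 : ℕ) : Cardinal) ≤ Module.rank ℚ V := by
    have h1 : ((n : Cardinal) + 1) ≤ Module.rank ℚ V := by
      have := Order.succ_le_of_lt hrank
      exact le_trans (Cardinal.add_one_le_succ _) this
    simpa using h1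
  obtain ⟨s, hs_card, hs_li⟩ := le_rank_iff_exists_linearIndependent.mp hle
  have hs_equiv : Nonempty (Fin (n+1) ≃ s) := by
    rw [← Cardinal.eq, hs_card, Cardinal.mk_fin]
  obtain ⟨eqv⟩ := hs_equiv
  set e : Fin (n+1) → V := fun i => (eqv i : V) with he
  have he_li : LinearIndependent ℚ e := hs_li.comp eqv (Equiv.injective eqv)
  -- dual functionals on V
  set M := Submodule.span ℚ (Set.range e) with hM
  set b : Module.Basis (Fin (n+1)) ℚ M := Module.Basis.span he_li with hb
  obtain ⟨M', hMc⟩ := M.exists_isCompl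
  set prV := M.linearProjOfIsCompl M' hMc with hprV
  set g : Fin (n+1) → (V →ₗ[ℚ] ℚ) := fun i => (b.coord i).comp prV with hg
  have hge : ∀ i j, g i (e j) = if i = j then 1 else 0 := by
    intro i j
    have h1 : prV (e j) = b j := by
      have hmem : e j ∈ M := Submodule.subset_span ⟨j, rfl⟩
      have h2 : (b j : V) = e j := congrArg Subtype.val (Module.Basis.span_apply he_li j)
      have := Submodule.linearProjOfIsCompl_apply_left hMc (⟨e j, hmem⟩ : M)
      rw [hprV]
      have h3 : (⟨e j, hmem⟩ : M) = b j := Subtype.ext h2.symm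
      rw [← h3]
      exact this
    rw [hg]
    simp only [LinearMap.comp_apply, h1]
    rw [Module.Basis.coord_apply, b.repr_self]
    by_cases hij : i = j
    · subst hij; simp
    · rw [if_neg hij, Finsupp.single_apply, if_neg (Ne.symm hij)]
  -- lift e to real numbers
  have hsurj : ∀ j, ∃ w : W, N.mkQ w = e j := fun j => N.mkQ_surjective (e j)
  choose w hw using hsurj
  -- projection of ℝ onto W
  obtain ⟨W', hWc⟩ := W.exists_isCompl
  set prW := W.linearProjOfIsCompl W' hWc with hprW
  refine ⟨fun i => (g i).comp (N.mkQ.comp prW), fun j => (w j : ℝ), ?_, ?_, ?_⟩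
  · intro i bb hbb
    have hbW : bb ∈ W := Submodule.subset_span (Set.mem_union_right A hbb)
    have h1 : prW bb = ⟨bb, hbW⟩ := by
      rw [hprW]
      exact Submodule.linearProjOfIsCompl_apply_left hWc (⟨bb, hbW⟩ : W)
    simp only [LinearMap.comp_apply, h1]
    have h2 : (⟨bb, hbW⟩ : W) ∈ N := by
      rw [hN]
      exact Submodule.subset_span hbb
    rw [Submodule.mkQ_apply, (Submodule.Quotient.mk_eq_zero N).mpr h2, map_zero]
  · intro j
    exact (w j).2
  · intro i j
    have h1 : prW ((w j : ℝ)) = w j :=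
      Submodule.linearProjOfIsCompl_apply_left hWc (w j)
    simp only [LinearMap.comp_apply, h1, hw j]
    exact hge i j

end S6
end

noncomputable section
namespace S6
open MvPolynomial

lemma pderiv_coeff_kill {m : ℕ} (D : K → K) (hadd : ∀ x y, D (x + y) = D x + D y)
    (hmul : ∀ x y, D (x * y) = D x * y + x * D y) (Q : MvPolynomial (Fin (m+1)) K)
    (h : ∀ ρ, D (Q.coeff ρ) = 0) (κ : Fin (m+1)) (σ : Fin (m+1) →₀ ℕ) :
    D ((pderiv κ Q).coeff σ) = 0 := by
  classical
  rw [coeff_pderiv, D_sum D hadd]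
  refine Finset.sum_eq_zero ?_
  intro ρ _
  split
  · rw [hmul, h ρ, zero_mul, D_natCast D hadd hmul, mul_zero, add_zero]
  · exact D_zero D hadd

lemma delH_Dx_iter {l : ℝ → ℂ} (h1 : ∀ a : ℝ, l (a + 1) = l a) (F : K) (k : ℕ) :
    delH l (Dx^[k] F) = Dx^[k] (delH l F) := by
  induction k with
  | zero => rfl
  | succ k ih =>
    rw [Function.iterate_succ_apply', Function.iterate_succ_apply', delH_Dx_comm h1, ih]

end S6
end



/-- a series of too large rational rank over `ℚ` solves no
nontrivial order-`n` ODE with Puiseux series coefficients. -/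
theorem stmt6 (n : ℕ) (s : ℝ → ℂ) (hs : OmegaSupp s)
    (hrank : (n : Cardinal) < rankQuot (suppG s) (Set.range ((↑) : ℚ → ℝ))) :
    ∀ P : PolyG n, (Function.support P).Finite → (∀ ρ, OmegaSupp (P ρ)) →
      (∀ ρ, ∃ d : ℕ, 0 < d ∧ ∀ a, P ρ a ≠ 0 → ∃ k : ℤ, a = (k : ℝ) / d) →
      P ≠ 0 →
      evalP P (fun κ : Fin (n+1) => (Dop (fun a => (a : ℂ)) 1)^[(κ : ℕ)] s) ≠ 0 := by
  intro P hPfin hPom hPrat hPne hE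
  classical
  obtain ⟨l, γ, hlB, hγ, hlγ⟩ :=
    S6.exists_dual_family n (suppG s) (Set.range ((↑) : ℚ → ℝ)) hrank
  set lC : Fin (n+1) → ℝ → ℂ := fun i a => ((l i a : ℚ) : ℂ) with hlC
  have hlC_add : ∀ i (x y : ℝ), lC i (x + y) = lC i x + lC i y := by
    intro i x y
    simp only [hlC, map_add]
    push_cast
    ring
  have hlB' : ∀ i (q : ℚ), lC i ((q : ℝ)) = 0 := by
    intro i q
    simp only [hlC, hlB i ((q : ℝ)) ⟨q, rfl⟩]
    norm_num
  have hlC_shift : ∀ i (a : ℝ), lC i (a + 1) = lC i a := by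
    intro i a
    rw [hlC_add]
    have h1 : lC i (1 : ℝ) = 0 := by
      have := hlB' i 1
      norm_num at this ⊢
      exact this
    rw [h1, add_zero]
  set δ : Fin (n+1) → S6.K → S6.K := fun i => S6.delH (lC i) with hδ
  have hδ_add : ∀ i (x y : S6.K), δ i (x + y) = δ i x + δ i y :=
    fun i x y => S6.delH_add (lC i) x y
  have hδ_mul : ∀ i (x y : S6.K), δ i (x * y) = δ i x * y + x * δ i y :=
    fun i x y => S6.delH_mul (hlC_add i) x y
  set sH : S6.K := S6.toH s hs with hsH
  set vH : Fin (n+1) → S6.K := fun κ => S6.Dx^[(κ : ℕ)] sH with hvH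
  have hvOm : ∀ κ, OmegaSupp ((vH κ).coeff) := fun κ => (S6.Dx_iter_bridge sH hs (κ : ℕ)).1
  have hvcoeff : ∀ κ : Fin (n+1),
      (vH κ).coeff = (Dop (fun a => (a : ℂ)) 1)^[(κ : ℕ)] s :=
    fun κ => (S6.Dx_iter_bridge sH hs (κ : ℕ)).2
  set u : Fin (n+1) → S6.K := fun i => δ i sH with hu
  set Good : MvPolynomial (Fin (n+1)) S6.K → Prop := fun Q =>
    Q ≠ 0 ∧ MvPolynomial.eval vH Q = 0 ∧ ∀ ρ i, δ i (Q.coeff ρ) = 0 with hGood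
  have hkill : ∀ ρ (i : Fin (n+1)), δ i ((S6.toMv P hPfin hPom).coeff ρ) = 0 := by
    intro ρ i
    rw [S6.toMv_coeff]
    refine S6.delH_eq_zero ?_
    intro a ha
    obtain ⟨d, hd, hdk⟩ := hPrat ρ
    obtain ⟨k, hk⟩ := hdk a ha
    have : a = (((k : ℚ) / (d : ℚ) : ℚ) : ℝ) := by
      rw [hk]
      push_cast
      ring
    rw [this]
    exact hlB' i _
  have hPP : Good (S6.toMv P hPfin hPom) := by
    refine ⟨?_, ?_, hkill⟩
    · intro h0
      rw [Function.ne_iff] at hPne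
      obtain ⟨ρ, hρ⟩ := hPne
      have h2 : (S6.toMv P hPfin hPom).coeff ρ = 0 := by rw [h0]; rfl
      rw [S6.toMv_coeff] at h2
      apply hρ
      funext a
      have h3 := congrArg (fun F : S6.K => F.coeff a) h2
      exact h3
    · ext a
      rw [S6.evalP_bridge P hPfin hPom vH hvOm a]
      have : (fun κ => (vH κ).coeff) = (fun κ : Fin (n+1) => (Dop (fun a => (a : ℂ)) 1)^[(κ : ℕ)] s) := by
        funext κ
        exact hvcoeff κ
      rw [this, hE]
      rfl
  have hex : ∃ d, ∃ Q, Good Q ∧ Q.totalDegree = d := ⟨_, _, hPP, rfl⟩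
  set d₀ := Nat.find hex with hd₀
  obtain ⟨Q, hQGood, hQdeg⟩ := Nat.find_spec hex
  have hmin : ∀ Q', Good Q' → d₀ ≤ Q'.totalDegree := by
    intro Q' hQ'
    by_contra hlt
    push_neg at hlt
    exact Nat.find_min hex hlt ⟨Q', hQ', rfl⟩
  have hd1 : 1 ≤ Q.totalDegree := by
    by_contra h
    push_neg at h
    have h0 : Q.totalDegree = 0 := by omega
    have hQC : Q = MvPolynomial.C (MvPolynomial.coeff 0 Q) := by
      apply MvPolynomial.ext
      intro ρ
      rw [MvPolynomial.coeff_C]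
      by_cases hρ : ρ = 0
      · rw [if_pos (by rw [hρ]), hρ]
      · rw [if_neg (fun hh => hρ hh.symm)]
        by_contra hne
        have hmem : ρ ∈ Q.support := MvPolynomial.mem_support_iff.mpr hne
        have := (MvPolynomial.totalDegree_eq_zero_iff _ Q).mp h0 ρ hmem
        apply hρ
        ext κ
        exact this κ
      -- impossible: then eval = coeff = 0 means Q = 0
    have := hQGood.2.1
    rw [hQC] at this
    rw [MvPolynomial.eval_C] at this
    apply hQGood.1
    rw [hQC, this, map_zero]
  set A : Fin (n+1) → S6.K := fun κ => MvPolynomial.eval vH (MvPolynomial.pderiv κ Q) with hA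
  have hApd : ∀ κ, MvPolynomial.pderiv κ Q ≠ 0 → A κ ≠ 0 := by
    intro κ hne hA0
    have hGood' : Good (MvPolynomial.pderiv κ Q) :=
      ⟨hne, hA0, fun ρ i =>
        S6.pderiv_coeff_kill (δ i) (hδ_add i) (hδ_mul i) Q (fun ρ' => hQGood.2.2 ρ' i) κ ρ⟩
    have h1 := hmin _ hGood'
    have h2 := S6.totalDegree_pderiv_lt κ Q hd1
    omega
  have hAne : ∃ κ, A κ ≠ 0 := by
    have hQne : Q.support.Nonempty := by
      rw [Finset.nonempty_iff_ne_empty]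
      intro h
      exact hQGood.1 (MvPolynomial.support_eq_empty.mp h)
    obtain ⟨ρ, hρmem, hρsup⟩ := Finset.exists_mem_eq_sup Q.support hQne
      (fun ρ : Fin (n+1) →₀ ℕ => ρ.sum fun _ e => e)
    have hρ1 : 1 ≤ ∑ κ, ρ κ := by
      rw [← S6.degF_eq]
      have : Q.totalDegree = ρ.sum fun _ e => e := hρsup
      omega
    have hκ : ∃ κ, ρ κ ≠ 0 := by
      by_contra hall
      push_neg at hall
      rw [Finset.sum_eq_zero (fun κ _ => hall κ)] at hρ1
      omega
    obtain ⟨κ, hκ⟩ := hκ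
    exact ⟨κ, hApd κ (S6.pderiv_ne_zero hρmem hκ)⟩
  have hrel : ∀ i, ∑ κ : Fin (n+1), A κ * S6.Dx^[(κ : ℕ)] (u i) = 0 := by
    intro i
    have h0 := S6.chainRule (δ i) (hδ_add i) (hδ_mul i) vH Q
    rw [hQGood.2.1] at h0
    have hmapC : S6.mapC (δ i) Q = 0 := by
      apply MvPolynomial.ext
      intro ρ
      rw [S6.coeff_mapC (δ i) (hδ_add i), hQGood.2.2 ρ i, MvPolynomial.coeff_zero]
    have hδ0 : δ i 0 = 0 := S6.D_zero _ (hδ_add i)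
    rw [hδ0, hmapC, map_zero, zero_add] at h0
    have hvu : ∀ κ : Fin (n+1), δ i (vH κ) = S6.Dx^[(κ : ℕ)] (u i) := by
      intro κ
      rw [hvH, hu]
      exact S6.delH_Dx_iter (hlC_shift i) sH (κ : ℕ)
    rw [Finset.sum_congr rfl (fun κ _ => by rw [hvu κ])] at h0
    exact h0.symm
  set M : Matrix (Fin (n+1)) (Fin (n+1)) S6.K :=
    Matrix.of fun j i => S6.Dx^[(j : ℕ)] (u i) with hM
  have hdet : M.det = 0 := by
    rw [← Matrix.det_transpose, ← Matrix.exists_mulVec_eq_zero_iff]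
    refine ⟨A, ?_, ?_⟩
    · intro h
      obtain ⟨κ, hκ⟩ := hAne
      exact hκ (congrFun h κ)
    · funext i
      have h1 : ∀ j : Fin (n+1), M.transpose i j * A j = A j * S6.Dx^[(j : ℕ)] (u i) := by
        intro j
        rw [Matrix.transpose_apply, hM]
        exact mul_comm _ _
      show ∑ j, M.transpose i j * A j = 0
      rw [Finset.sum_congr rfl (fun j _ => h1 j)]
      exact hrel i
  obtain ⟨c, hc0, hcD, hcsum⟩ := S6.wronskian_dep S6.Dx S6.Dx_add S6.Dx_mul (n+1) u hdet
  set lam : Fin (n+1) → ℂ := fun i => (c i).coeff 0 with hlam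
  have hcc : ∀ i, c i = HahnSeries.single (0 : ℝ) (lam i) := fun i => S6.Dx_const (hcD i)
  have hkey : ∀ a : ℝ, (∑ i, lam i * lC i a) * s a = 0 := by
    intro a
    have h1 := congrArg (fun F : S6.K => F.coeff a) hcsum
    simp only [HahnSeries.coeff_zero] at h1
    rw [S6.sum_coeff] at h1
    have h2 : ∀ i, (c i * u i).coeff a = lam i * lC i a * s a := by
      intro i
      rw [hcc i, HahnSeries.coeff_single_zero_mul]
      have : (u i).coeff a = lC i a * s a := rfl
      rw [this, mul_assoc]
    rw [Finset.sum_congr rfl (fun i _ => h2 i)] at h1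
    rw [Finset.sum_mul]
    exact h1
  set L : ℝ →ₗ[ℚ] ℂ :=
    { toFun := fun a => ∑ i, lam i * lC i a
      map_add' := by
        intro x y
        rw [← Finset.sum_add_distrib]
        refine Finset.sum_congr rfl fun i _ => ?_
        rw [hlC_add, mul_add]
      map_smul' := by
        intro q x
        simp only [RingHom.id_apply]
        rw [Finset.smul_sum]
        refine Finset.sum_congr rfl fun i _ => ?_
        have h1 : lC i (q • x) = (q : ℂ) * lC i x := by
          simp only [hlC]
          rw [map_smul, smul_eq_mul]
          push_cast
          ring
        rw [h1, Rat.smul_def]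
        ring } with hL
  have hLzero : ∀ x ∈ Submodule.span ℚ (suppG s ∪ Set.range ((↑) : ℚ → ℝ)), L x = 0 := by
    have hsub : suppG s ∪ Set.range ((↑) : ℚ → ℝ) ⊆ ↑(LinearMap.ker L) := by
      rintro x (hx | ⟨q, rfl⟩)
      · rw [SetLike.mem_coe, LinearMap.mem_ker]
        have := hkey x
        have hsx : s x ≠ 0 := hx
        have : (∑ i, lam i * lC i x) = 0 := by
          rcases mul_eq_zero.mp this with h | h
          · exact h
          · exact absurd h hsx
        exact this
      · rw [SetLike.mem_coe, LinearMap.mem_ker]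
        show ∑ i, lam i * lC i ((q : ℝ)) = 0
        refine Finset.sum_eq_zero fun i _ => ?_
        rw [hlB' i q, mul_zero]
    intro x hx
    have := Submodule.span_le.mpr hsub hx
    exact LinearMap.mem_ker.mp this
  have hlamj : ∀ j, lam j = 0 := by
    intro j
    have h1 := hLzero (γ j) (hγ j)
    have h2 : L (γ j) = lam j := by
      show ∑ i, lam i * lC i (γ j) = lam j
      have h3 : ∀ i, lam i * lC i (γ j) = if i = j then lam j else 0 := by
        intro i
        simp only [hlC, hlγ i j]
        by_cases hij : i = j
        · subst hij
          rw [if_pos rfl, if_pos rfl]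
          norm_num
        · rw [if_neg hij, if_neg hij]
          norm_num
      rw [Finset.sum_congr rfl (fun i _ => h3 i), Finset.sum_ite_eq' Finset.univ j fun _ => lam j,
        if_pos (Finset.mem_univ j)]
    rw [h1] at h2
    exact h2.symm
  apply hc0
  funext i
  rw [hcc i, hlamj i]
  simp
end
end

section
/- Let s(x) ∈ Ω be a generalized power series with dim_ℚ ⟨supp s(x)⟩_ℚ > n. Then s(x) does not satisfy any nontrivial differential equation P(y, y', …, y^{(n)}) = 0 of order n where P is a nonzero polynomial with constant complex coefficients. -/
open Classical Filter

noncomputable section Aux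

open HahnSeries

abbrev Khs := HahnSeries ℝ ℂ

lemma isPWO_of_omega {f : ℝ → ℂ} (hf : OmegaSupp f) : (Function.support f).IsPWO := by
  apply Set.IsWF.isPWO
  rw [Set.isWF_iff_no_descending_seq]
  intro seq hanti hmem
  have hsub : Set.range seq ⊆ {a : ℝ | f a ≠ 0 ∧ a ≤ seq 0} := by
    rintro x ⟨k, rfl⟩
    exact ⟨hmem k, hanti.antitone (Nat.zero_le k)⟩
  exact Set.infinite_range_of_injective hanti.injective ((hf (seq 0)).subset hsub)

lemma conv_finite (x y : Khs) (c : ℝ) :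
    {b : ℝ | x.coeff b ≠ 0 ∧ y.coeff (c - b) ≠ 0}.Finite := by
  classical
  apply Set.Finite.subset
    (Finset.finite_toSet ((Finset.addAntidiagonal x.isPWO_support y.isPWO_support c).image Prod.fst))
  rintro b ⟨hx, hy⟩
  simp only [Finset.coe_image, Set.mem_image, Finset.mem_coe]
  exact ⟨(b, c - b), Finset.mem_addAntidiagonal.mpr ⟨hx, hy, by ring⟩, rfl⟩

lemma mul_coeff' (x y : Khs) (a : ℝ) :
    (x * y).coeff a = mulG x.coeff y.coeff a := by
  classical
  rw [HahnSeries.coeff_mul]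
  have hinj : ∀ p ∈ Finset.addAntidiagonal x.isPWO_support y.isPWO_support a,
      ∀ q ∈ Finset.addAntidiagonal x.isPWO_support y.isPWO_support a,
      p.1 = q.1 → p = q := by
    intro p hp q hq h
    rw [Finset.addAntidiagonal, Finset.mem_addAntidiagonal] at hp hq
    exact Prod.ext h (by linarith [hp.2.2, hq.2.2])
  have hsupp : Function.support (fun b => x.coeff b * y.coeff (a - b)) ⊆
      ↑((Finset.addAntidiagonal x.isPWO_support y.isPWO_support a).image Prod.fst) := by
    intro b hb
    have hx : x.coeff b ≠ 0 := left_ne_zero_of_mul hb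
    have hy : y.coeff (a - b) ≠ 0 := right_ne_zero_of_mul hb
    simp only [Finset.coe_image, Set.mem_image, Finset.mem_coe]
    exact ⟨(b, a - b), Finset.mem_addAntidiagonal.mpr ⟨hx, hy, by ring⟩, rfl⟩
  rw [show mulG x.coeff y.coeff a = ∑ᶠ b, x.coeff b * y.coeff (a - b) from rfl,
    finsum_eq_finset_sum_of_support_subset _ hsupp, Finset.sum_image hinj]
  refine Finset.sum_congr rfl fun p hp => ?_
  rw [Finset.addAntidiagonal, Finset.mem_addAntidiagonal] at hp
  rw [show a - p.1 = p.2 by linarith [hp.2.2]]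

lemma oneG_coeff : oneG = (1 : Khs).coeff := by
  funext a
  rw [show ((1 : Khs)) = HahnSeries.single (0:ℝ) (1:ℂ) from rfl, oneG]
  simp [HahnSeries.coeff_single]

lemma coeff_sum {α : Type*} (t : Finset α) (f : α → Khs) (a : ℝ) :
    (∑ i ∈ t, f i).coeff a = ∑ i ∈ t, (f i).coeff a := by
  classical
  induction t using Finset.induction_on with
  | empty => simp
  | insert _ _ h ih => rw [Finset.sum_insert h, Finset.sum_insert h, HahnSeries.coeff_add, ih]

end Aux

noncomputable section Aux2
open HahnSeries

lemma powG_coeff (x : Khs) (k : ℕ) : powG x.coeff k = (x ^ k).coeff := by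
  induction k with
  | zero => rw [powG, pow_zero, oneG_coeff]
  | succ k ih =>
      rw [powG, ih, pow_succ']
      funext a
      rw [mul_coeff']

lemma foldr_mulG_coeff (L : List Khs) :
    List.foldr mulG oneG (L.map HahnSeries.coeff) = L.prod.coeff := by
  induction L with
  | nil => simp [oneG_coeff]
  | cons x L ih =>
      rw [List.map_cons, List.foldr_cons, ih, List.prod_cons]
      funext a
      rw [mul_coeff']

lemma prodPow_coeff {n : ℕ} (V : Fin (n+1) → Khs) (ρ : Fin (n+1) →₀ ℕ) :
    prodPow (fun κ => (V κ).coeff) ρ = (∏ κ : Fin (n+1), V κ ^ ρ κ).coeff := by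
  rw [prodPow]
  have h1 : (List.ofFn fun κ : Fin (n+1) => powG ((V κ).coeff) (ρ κ)) =
      (List.ofFn fun κ : Fin (n+1) => V κ ^ ρ κ).map HahnSeries.coeff := by
    rw [List.map_ofFn]
    exact congrArg List.ofFn (funext fun κ => powG_coeff (V κ) (ρ κ))
  rw [h1, foldr_mulG_coeff, List.prod_ofFn]

/-- The ordinary derivative on Hahn series. -/
def Dhs (x : Khs) : Khs :=
  ⟨fun a => ((a + 1 : ℝ) : ℂ) * x.coeff (a + 1), by
    have hsub : (Function.support fun a : ℝ => ((a + 1 : ℝ) : ℂ) * x.coeff (a + 1)) ⊆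
        (fun b : ℝ => b - 1) '' Function.support x.coeff := by
      intro a ha
      exact ⟨a + 1, right_ne_zero_of_mul ha, by ring⟩
    exact Set.IsPWO.mono (x.isPWO_support.image_of_monotoneOn
      ((fun _ _ _ _ h => by dsimp; linarith : MonotoneOn (fun b : ℝ => b - 1) _))) hsub⟩

@[simp] lemma Dhs_coeff (x : Khs) (a : ℝ) :
    (Dhs x).coeff a = ((a + 1 : ℝ) : ℂ) * x.coeff (a + 1) := rfl

/-- Twisted Euler derivation attached to an additive map `ℓ`. -/
def Dl (l : ℝ → ℂ) (x : Khs) : Khs :=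
  ⟨fun a => l a * x.coeff a,
    x.isPWO_support.mono fun a ha => right_ne_zero_of_mul ha⟩

@[simp] lemma Dl_coeff (l : ℝ → ℂ) (x : Khs) (a : ℝ) :
    (Dl l x).coeff a = l a * x.coeff a := rfl

lemma Dhs_add (x y : Khs) : Dhs (x + y) = Dhs x + Dhs y := by
  apply HahnSeries.coeff_injective
  funext a
  simp [mul_add]

lemma Dl_add (l : ℝ → ℂ) (x y : Khs) : Dl l (x + y) = Dl l x + Dl l y := by
  apply HahnSeries.coeff_injective
  funext a
  simp [mul_add]

lemma algebraMap_single (z : ℂ) : algebraMap ℂ Khs z = HahnSeries.single (0:ℝ) z := by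
  rw [HahnSeries.algebraMap_apply', PowerSeries.algebraMap_apply]
  simp [HahnSeries.ofPowerSeries_C, HahnSeries.C_apply]

lemma algebraMap_coeff (z : ℂ) (a : ℝ) :
    (algebraMap ℂ Khs z).coeff a = if a = 0 then z else 0 := by
  rw [algebraMap_single, HahnSeries.coeff_single]

lemma Dhs_algebraMap (z : ℂ) : Dhs (algebraMap ℂ Khs z) = 0 := by
  apply HahnSeries.coeff_injective
  funext a
  rw [Dhs_coeff, algebraMap_coeff]
  by_cases h : a + 1 = 0
  · rw [if_pos h, h]; simp
  · rw [if_neg h]; simp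

lemma Dl_algebraMap (l : ℝ → ℂ) (hl : ∀ x y, l (x + y) = l x + l y) (z : ℂ) :
    Dl l (algebraMap ℂ Khs z) = 0 := by
  have hl0 : l 0 = 0 := by
    have := hl 0 0
    simp at this
    linear_combination this
  apply HahnSeries.coeff_injective
  funext a
  rw [Dl_coeff, algebraMap_coeff]
  by_cases h : a = 0
  · rw [if_pos h, h, hl0]; simp
  · rw [if_neg h]; simp

lemma Dhs_const_eq (x : Khs) (h : Dhs x = 0) : x = algebraMap ℂ Khs (x.coeff 0) := by
  apply HahnSeries.coeff_injective
  funext a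
  rw [algebraMap_coeff]
  by_cases ha : a = 0
  · rw [if_pos ha, ha]
  · rw [if_neg ha]
    have := congrArg (fun y : Khs => y.coeff (a - 1)) h
    simp only [Dhs_coeff, HahnSeries.coeff_zero, sub_add_cancel] at this
    rcases mul_eq_zero.mp this with h1 | h2
    · exact absurd (by exact_mod_cast h1) ha
    · exact h2

lemma Cmul_coeff (z : ℂ) (x : Khs) (a : ℝ) :
    (algebraMap ℂ Khs z * x).coeff a = z * x.coeff a := by
  rw [algebraMap_single]
  simp [HahnSeries.coeff_single_zero_mul]

end Aux2

noncomputable section Aux3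
open HahnSeries

lemma supp_conv_fin (x y : Khs) (c : ℝ) :
    (Function.support fun b => x.coeff b * y.coeff (c - b)).Finite := by
  apply (conv_finite x y c).subset
  intro b hb
  exact ⟨left_ne_zero_of_mul hb, right_ne_zero_of_mul hb⟩

lemma Dhs_mul (x y : Khs) : Dhs (x * y) = Dhs x * y + x * Dhs y := by
  apply HahnSeries.coeff_injective
  funext a
  rw [HahnSeries.coeff_add, Dhs_coeff, mul_coeff', mul_coeff', mul_coeff']
  have h1 : mulG (Dhs x).coeff y.coeff a
      = ∑ᶠ b : ℝ, ((b : ℂ)) * (x.coeff b * y.coeff (a + 1 - b)) := by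
    rw [show mulG (Dhs x).coeff y.coeff a = ∑ᶠ b : ℝ, (Dhs x).coeff b * y.coeff (a - b) from rfl]
    rw [← finsum_comp_equiv (Equiv.addRight (1:ℝ))
      (f := fun b : ℝ => ((b : ℂ)) * (x.coeff b * y.coeff (a + 1 - b)))]
    apply finsum_congr
    intro b
    simp only [Equiv.coe_addRight, Dhs_coeff]
    rw [show a + 1 - (b + 1) = a - b by ring]
    push_cast
    ring
  have h2 : mulG x.coeff (Dhs y).coeff a
      = ∑ᶠ b : ℝ, ((a + 1 - b : ℝ) : ℂ) * (x.coeff b * y.coeff (a + 1 - b)) := by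
    apply finsum_congr
    intro b
    simp only [Dhs_coeff]
    rw [show a - b + 1 = a + 1 - b by ring]
    ring
  rw [h1, h2]
  have hf1 : (Function.support fun b : ℝ => ((b:ℂ)) * (x.coeff b * y.coeff (a + 1 - b))).Finite := by
    apply (supp_conv_fin x y (a+1)).subset
    intro b hb
    exact right_ne_zero_of_mul hb
  have hf2 : (Function.support fun b : ℝ =>
      ((a + 1 - b : ℝ) : ℂ) * (x.coeff b * y.coeff (a + 1 - b))).Finite := by
    apply (supp_conv_fin x y (a+1)).subset
    intro b hb
    exact right_ne_zero_of_mul hb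
  rw [← finsum_add_distrib hf1 hf2]
  have : (fun b : ℝ => ((b:ℂ)) * (x.coeff b * y.coeff (a + 1 - b))
        + ((a + 1 - b : ℝ) : ℂ) * (x.coeff b * y.coeff (a + 1 - b)))
      = fun b : ℝ => ((a + 1 : ℝ) : ℂ) * (x.coeff b * y.coeff (a + 1 - b)) := by
    funext b
    push_cast
    ring
  rw [this]
  rw [show mulG x.coeff y.coeff (a+1) = ∑ᶠ b : ℝ, x.coeff b * y.coeff (a + 1 - b) from rfl]
  rw [mul_finsum]

lemma Dl_mul (l : ℝ → ℂ) (hl : ∀ u v, l (u + v) = l u + l v) (x y : Khs) :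
    Dl l (x * y) = Dl l x * y + x * Dl l y := by
  apply HahnSeries.coeff_injective
  funext a
  rw [HahnSeries.coeff_add, Dl_coeff, mul_coeff', mul_coeff', mul_coeff']
  have h1 : mulG (Dl l x).coeff y.coeff a = ∑ᶠ b : ℝ, l b * (x.coeff b * y.coeff (a - b)) := by
    apply finsum_congr; intro b; rw [Dl_coeff]; ring
  have h2 : mulG x.coeff (Dl l y).coeff a
      = ∑ᶠ b : ℝ, l (a - b) * (x.coeff b * y.coeff (a - b)) := by
    apply finsum_congr; intro b; rw [Dl_coeff]; ring
  rw [h1, h2]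
  have hf1 : (Function.support fun b : ℝ => l b * (x.coeff b * y.coeff (a - b))).Finite :=
    (supp_conv_fin x y a).subset fun b hb => right_ne_zero_of_mul hb
  have hf2 : (Function.support fun b : ℝ => l (a - b) * (x.coeff b * y.coeff (a - b))).Finite :=
    (supp_conv_fin x y a).subset fun b hb => right_ne_zero_of_mul hb
  rw [← finsum_add_distrib hf1 hf2]
  have : (fun b : ℝ => l b * (x.coeff b * y.coeff (a - b))
        + l (a - b) * (x.coeff b * y.coeff (a - b)))
      = fun b : ℝ => l a * (x.coeff b * y.coeff (a - b)) := by
    funext b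
    rw [show l a = l b + l (a - b) by rw [← hl b (a - b)]; ring_nf]
    ring
  rw [this, show mulG x.coeff y.coeff a = ∑ᶠ b : ℝ, x.coeff b * y.coeff (a - b) from rfl]
  rw [mul_finsum]

lemma Dl_Dhs_comm (l : ℝ → ℂ) (hl : ∀ u v, l (u + v) = l u + l v) (hl1 : l 1 = 0) (x : Khs) :
    Dl l (Dhs x) = Dhs (Dl l x) := by
  apply HahnSeries.coeff_injective
  funext a
  rw [Dl_coeff, Dhs_coeff, Dhs_coeff, Dl_coeff, hl a 1, hl1, add_zero]
  ring

lemma comm_iterate {δ : Khs → Khs} (hcomm : ∀ x, δ (Dhs x) = Dhs (δ x)) (x : Khs) (k : ℕ) :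
    δ (Dhs^[k] x) = Dhs^[k] (δ x) := by
  induction k with
  | zero => rfl
  | succ k ih =>
      rw [Function.iterate_succ_apply', Function.iterate_succ_apply', hcomm, ih]

lemma deriv_zero' {δ : Khs → Khs} (hadd : ∀ x y, δ (x + y) = δ x + δ y) : δ 0 = 0 := by
  have := hadd 0 0
  rw [add_zero] at this
  exact add_eq_left.mp this.symm

lemma chain_rule {n : ℕ} (δ : Khs → Khs) (hadd : ∀ x y, δ (x + y) = δ x + δ y)
    (hmul : ∀ x y, δ (x * y) = δ x * y + x * δ y)
    (hC : ∀ z : ℂ, δ (algebraMap ℂ Khs z) = 0)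
    (w : Fin (n+1) → Khs) (p : MvPolynomial (Fin (n+1)) ℂ) :
    δ (MvPolynomial.aeval w p) =
      ∑ κ : Fin (n+1), MvPolynomial.aeval w (MvPolynomial.pderiv κ p) * δ (w κ) := by
  classical
  induction p using MvPolynomial.induction_on with
  | C z => simp [MvPolynomial.aeval_C, hC, MvPolynomial.pderiv_C]
  | add p q hp hq =>
      rw [map_add, hadd, hp, hq, ← Finset.sum_add_distrib]
      apply Finset.sum_congr rfl
      intro κ _
      rw [map_add, map_add, add_mul]
  | mul_X p κ hp =>
      rw [map_mul, MvPolynomial.aeval_X, hmul, hp]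
      have hr : ∀ i : Fin (n+1),
          MvPolynomial.aeval w (MvPolynomial.pderiv i (p * MvPolynomial.X κ)) * δ (w i)
          = (MvPolynomial.aeval w (MvPolynomial.pderiv i p) * δ (w i)) * w κ
            + (if κ = i then MvPolynomial.aeval w p * δ (w κ) else 0) := by
        intro i
        rw [MvPolynomial.pderiv_mul, MvPolynomial.pderiv_X, map_add, map_mul, map_mul,
          MvPolynomial.aeval_X]
        by_cases h : κ = i
        · subst h
          rw [Pi.single_eq_same, map_one, if_pos rfl]
          ring
        · rw [Pi.single_eq_of_ne h, map_zero, if_neg h]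
          ring
      rw [Finset.sum_congr rfl (fun i _ => hr i), Finset.sum_add_distrib]
      rw [Finset.sum_ite_eq Finset.univ κ (fun _ => MvPolynomial.aeval w p * δ (w κ))]
      simp only [Finset.mem_univ, if_pos]
      all_goals rw [← Finset.sum_mul]
      all_goals ring

end Aux3

noncomputable section Aux4
open HahnSeries

def ConstIndep {m : ℕ} (u : Fin m → Khs) : Prop :=
  ∀ g : Fin m → Khs, (∀ i, Dhs (g i) = 0) → ∑ i, g i * u i = 0 → ∀ i, g i = 0

lemma Dhs_zero : Dhs 0 = 0 := deriv_zero' Dhs_add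

lemma Dhs_one : Dhs 1 = 0 := by
  rw [← map_one (algebraMap ℂ Khs), Dhs_algebraMap]

lemma Dhs_sum {α : Type*} (t : Finset α) (f : α → Khs) :
    Dhs (∑ i ∈ t, f i) = ∑ i ∈ t, Dhs (f i) := by
  classical
  induction t using Finset.induction_on with
  | empty => simpa using Dhs_zero
  | insert _ _ h ih => rw [Finset.sum_insert h, Finset.sum_insert h, Dhs_add, ih]

lemma constIndep_comp {m m' : ℕ} (u : Fin m → Khs) (hu : ConstIndep u)
    (e : Fin m' → Fin m) (he : Function.Injective e) : ConstIndep (u ∘ e) := by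
  classical
  intro g hg hsum j
  set G : Fin m → Khs := fun i => ∑ k : Fin m', if e k = i then g k else 0 with hG
  have hGconst : ∀ i, Dhs (G i) = 0 := by
    intro i
    rw [hG, Dhs_sum]
    apply Finset.sum_eq_zero
    intro k _
    rw [apply_ite Dhs, hg k, Dhs_zero, ite_self]
  have hGsum : ∑ i, G i * u i = 0 := by
    have h1 : ∀ i : Fin m, G i * u i = ∑ k : Fin m', if e k = i then g k * u i else 0 := by
      intro i
      rw [hG, Finset.sum_mul]
      exact Finset.sum_congr rfl fun k _ => by rw [ite_mul, zero_mul]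
    have key : ∑ i, G i * u i = ∑ k : Fin m', g k * (u ∘ e) k := by
      rw [Finset.sum_congr rfl fun i _ => h1 i, Finset.sum_comm]
      apply Finset.sum_congr rfl
      intro k _
      rw [Finset.sum_ite_eq Finset.univ (e k) (fun i => g k * u i)]
      simp
    rw [key]
    exact hsum
  have hGj := hu G hGconst hGsum (e j)
  have this2 : (∑ k : Fin m', if e k = e j then g k else 0) = 0 := hGj
  have h2 : (∑ k : Fin m', if e k = e j then g k else 0) = g j := by
    rw [Finset.sum_eq_single j]
    · rw [if_pos rfl]
    · intro k _ hk
      rw [if_neg (fun hh => hk (he hh))]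
    · intro hmem
      exact absurd (Finset.mem_univ j) hmem
  rwa [h2] at this2

lemma wronskian_main : ∀ m : ℕ, ∀ u : Fin m → Khs, ConstIndep u →
    ∀ g : Fin m → Khs, (∀ κ : Fin m, ∑ i, g i * Dhs^[(κ : ℕ)] (u i) = 0) → ∀ i, g i = 0 := by
  intro m
  induction m with
  | zero => intro u _ g _ i; exact i.elim0
  | succ m IH =>
      intro u hu g hg
      by_cases hz : ∃ j, g j = 0
      · obtain ⟨j, hj⟩ := hz
        intro i
        by_cases hij : i = j
        · rwa [hij]
        · obtain ⟨k, hk⟩ := Fin.exists_succAbove_eq hij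
          have hu' : ConstIndep (u ∘ j.succAbove) :=
            constIndep_comp u hu _ Fin.succAbove_right_injective
          have hg' : ∀ κ : Fin m,
              ∑ k' : Fin m, (g ∘ j.succAbove) k' * Dhs^[(κ : ℕ)] ((u ∘ j.succAbove) k') = 0 := by
            intro κ
            have h0 := hg κ.castSucc
            rw [Fin.sum_univ_succAbove (fun i => g i * Dhs^[((κ.castSucc : Fin (m+1)) : ℕ)] (u i)) j]
              at h0
            rw [hj, zero_mul, zero_add] at h0
            simpa using h0
          have := IH (u ∘ j.succAbove) hu' (g ∘ j.succAbove) hg' k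
          rw [← hk]
          exact this
      · push_neg at hz
        exfalso
        set h : Fin (m+1) → Khs := fun i => (g 0)⁻¹ * g i with hh
        have h01 : h 0 = 1 := inv_mul_cancel₀ (hz 0)
        have heq : ∀ κ : Fin (m+1), ∑ i, h i * Dhs^[(κ : ℕ)] (u i) = 0 := by
          intro κ
          have : ∑ i, h i * Dhs^[(κ : ℕ)] (u i)
              = (g 0)⁻¹ * ∑ i, g i * Dhs^[(κ : ℕ)] (u i) := by
            rw [Finset.mul_sum]
            exact Finset.sum_congr rfl fun i _ => by rw [hh]; ring
          rw [this, hg κ, mul_zero]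
        have hder : ∀ κ : Fin m, ∑ i, Dhs (h i) * Dhs^[(κ : ℕ)] (u i) = 0 := by
          intro κ
          have h0 := congrArg Dhs (heq κ.castSucc)
          rw [Dhs_zero, Dhs_sum] at h0
          have h1 : ∀ i : Fin (m+1),
              Dhs (h i * Dhs^[((κ.castSucc : Fin (m+1)) : ℕ)] (u i))
              = Dhs (h i) * Dhs^[(κ : ℕ)] (u i) + h i * Dhs^[((κ.succ : Fin (m+1)) : ℕ)] (u i) := by
            intro i
            rw [Dhs_mul]
            simp only [Fin.coe_castSucc, Fin.val_succ]
            rw [Function.iterate_succ_apply' Dhs (κ : ℕ) (u i)]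
          rw [Finset.sum_congr rfl fun i _ => h1 i, Finset.sum_add_distrib, heq κ.succ,
            add_zero] at h0
          exact h0
        have htail : ∀ k : Fin m, Dhs (h k.succ) = 0 := by
          have hu' : ConstIndep (u ∘ Fin.succ) :=
            constIndep_comp u hu Fin.succ (Fin.succ_injective m)
          intro k
          refine IH (u ∘ Fin.succ) hu' (fun k' => Dhs (h k'.succ)) ?_ k
          intro κ
          have h0 := hder κ
          rw [Fin.sum_univ_succ] at h0
          rw [h01, Dhs_one, zero_mul, zero_add] at h0
          exact h0
        have hall : ∀ i : Fin (m+1), Dhs (h i) = 0 := by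
          intro i
          rcases Fin.eq_zero_or_eq_succ i with h0 | ⟨k, hk⟩
          · rw [h0, h01, Dhs_one]
          · rw [hk]; exact htail k
        have hs0 : ∑ i, h i * u i = 0 := by
          have := heq 0
          simpa using this
        have := hu h hall hs0 0
        rw [h01] at this
        exact one_ne_zero this
end Aux4

noncomputable section Aux5
open HahnSeries

lemma no_common_kernel {n : ℕ} (u : Fin (n+1) → Khs) (hu : ConstIndep u)
    (A : Fin (n+1) → Khs) (hA : A ≠ 0)
    (hsol : ∀ i, ∑ κ : Fin (n+1), A κ * Dhs^[(κ : ℕ)] (u i) = 0) : False := by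
  classical
  set M : Matrix (Fin (n+1)) (Fin (n+1)) Khs := fun κ i => Dhs^[(κ : ℕ)] (u i) with hM
  have hdet : M.det ≠ 0 := by
    intro h0
    obtain ⟨v, hv, hMv⟩ := Matrix.exists_mulVec_eq_zero_iff.mpr h0
    have hall := wronskian_main (n+1) u hu v ?_
    · exact hv (funext hall)
    · intro κ
      have h1 := congrFun hMv κ
      rw [Matrix.mulVec, dotProduct] at h1
      rw [show (0 : Fin (n+1) → Khs) κ = 0 from rfl] at h1
      rw [← h1]
      exact Finset.sum_congr rfl fun i _ => by rw [hM]; ring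
  apply hdet
  rw [← Matrix.det_transpose]
  apply Matrix.exists_mulVec_eq_zero_iff.mp
  refine ⟨A, hA, ?_⟩
  funext i
  rw [Matrix.mulVec, dotProduct]
  rw [show (0 : Fin (n+1) → Khs) i = 0 from rfl, ← hsol i]
  exact Finset.sum_congr rfl fun κ _ => by rw [Matrix.transpose_apply, hM]; ring

lemma coeff_pderiv {n : ℕ} (q : MvPolynomial (Fin (n+1)) ℂ) (i : Fin (n+1))
    (τ : Fin (n+1) →₀ ℕ) :
    MvPolynomial.coeff τ (MvPolynomial.pderiv i q)
      = ((τ i : ℕ) + 1 : ℂ) * MvPolynomial.coeff (τ + Finsupp.single i 1) q := by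
  classical
  rw [show q = ∑ ρ ∈ q.support, MvPolynomial.monomial ρ (MvPolynomial.coeff ρ q) from
    (MvPolynomial.support_sum_monomial_coeff q).symm]
  rw [map_sum, MvPolynomial.coeff_sum, MvPolynomial.coeff_sum]
  have hL : ∀ ρ : Fin (n+1) →₀ ℕ,
      MvPolynomial.coeff τ
        (MvPolynomial.pderiv i (MvPolynomial.monomial ρ (MvPolynomial.coeff ρ q)))
      = if ρ = τ + Finsupp.single i 1
          then MvPolynomial.coeff ρ q * ((τ i : ℕ) + 1 : ℂ) else 0 := by
    intro ρ
    rw [MvPolynomial.pderiv_monomial, MvPolynomial.coeff_monomial]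
    by_cases h : ρ = τ + Finsupp.single i 1
    · subst h
      rw [if_pos rfl, if_pos (add_tsub_cancel_right τ (Finsupp.single i 1))]
      rw [Finsupp.add_apply, Finsupp.single_eq_same]
      push_cast
      ring
    · rw [if_neg h]
      by_cases h2 : ρ - Finsupp.single i 1 = τ
      · rw [if_pos h2]
        have hzero : ρ i = 0 := by
          by_contra hne
          apply h
          have hle : Finsupp.single i 1 ≤ ρ := by
            rw [Finsupp.single_le_iff]
            omega
          rw [← h2, tsub_add_cancel_of_le hle]
        rw [hzero]
        simp
      · rw [if_neg h2]
  rw [Finset.sum_congr rfl fun ρ _ => hL ρ, Finset.mul_sum]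
  apply Finset.sum_congr rfl
  intro ρ _
  rw [MvPolynomial.coeff_monomial]
  split_ifs with h
  · ring
  · ring
end Aux5

noncomputable section Aux6

lemma descent_nat (s : ℝ → ℂ) (hs : OmegaSupp s) (l : ℝ → ℂ)
    (hrel : ∀ a : ℝ, ((a + 1 : ℝ) : ℂ) * s (a + 1) = l a * s a)
    (μ : ℝ) (hμ : s μ ≠ 0) : ∃ k : ℕ, μ = (k : ℝ) := by
  by_contra hk
  push_neg at hk
  have key : ∀ k : ℕ, s (μ - k) ≠ 0 := by
    intro k
    induction k with
    | zero => simpa using hμ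
    | succ k ih =>
        have hne : μ - (k : ℝ) ≠ 0 := by
          intro h0
          exact hk k (by linarith)
        have h1 := hrel (μ - ((k + 1 : ℕ) : ℝ))
        rw [show μ - ((k + 1 : ℕ) : ℝ) + 1 = μ - (k : ℝ) by push_cast; ring] at h1
        intro h0
        rw [h0, mul_zero] at h1
        rcases mul_eq_zero.mp h1 with h2 | h3
        · exact hne (by exact_mod_cast h2)
        · exact ih h3
  have hinj : Function.Injective (fun k : ℕ => μ - (k : ℝ)) := by
    intro a b hab
    simp only [sub_right_inj, Nat.cast_inj] at hab
    exact hab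
  have hsubset : Set.range (fun k : ℕ => μ - (k : ℝ)) ⊆ {a : ℝ | s a ≠ 0 ∧ a ≤ μ} := by
    rintro x ⟨k, rfl⟩
    refine ⟨key k, by simp⟩
  exact Set.infinite_range_of_injective hinj ((hs μ).subset hsubset)

lemma natcast_not_indep {n : ℕ} (hn : 1 ≤ n) (γ : Fin (n+1) → ℝ)
    (hγ : LinearIndependent ℚ γ) (m : Fin (n+1) → ℕ) (hm : ∀ i, γ i = (m i : ℝ)) : False := by
  have h01 : (0 : Fin (n+1)) ≠ 1 := by
    intro h
    have := congrArg Fin.val h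
    simp [Fin.val_one, Nat.mod_eq_of_lt (by omega : 1 < n + 1)] at this
  have hpair : LinearIndependent ℚ (γ ∘ (![0, 1] : Fin 2 → Fin (n+1))) := by
    apply hγ.comp
    intro a b hab
    fin_cases a <;> fin_cases b <;> simp_all <;> first
      | rfl
      | exact absurd hab h01
      | exact absurd hab.symm h01
  have h0 : γ 0 ≠ 0 := hγ.ne_zero 0
  have h1 : γ 1 ≠ 0 := hγ.ne_zero 1
  have hm0 : (m 0 : ℝ) ≠ 0 := by rw [← hm 0]; exact h0
  have hm1 : (m 1 : ℝ) ≠ 0 := by rw [← hm 1]; exact h1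
  have := Fintype.linearIndependent_iff.mp hpair
    (fun j => if j = 0 then (m 1 : ℚ) else -(m 0 : ℚ)) ?_ 0
  · rw [if_pos rfl] at this
    exact hm1 (by exact_mod_cast this)
  · rw [Fin.sum_univ_two]
    simp only [if_pos rfl, if_neg one_ne_zero]
    show (m 1 : ℚ) • (γ 0) + (-(m 0 : ℚ)) • (γ 1) = 0
    rw [hm 0, hm 1]
    push_cast
    rw [Rat.smul_def, Rat.smul_def]
    push_cast
    ring

lemma exists_dual_family {n : ℕ} (γ : Fin (n+1) → ℝ) (hγ : LinearIndependent ℚ γ) :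
    ∃ Λ : Fin (n+1) → (ℝ → ℂ),
      (∀ i, ∀ x y : ℝ, Λ i (x + y) = Λ i x + Λ i y) ∧
      (∀ i j, Λ i (γ j) = if i = j then 1 else 0) := by
  classical
  have hsub : LinearIndepOn ℚ id (Set.range γ) := hγ.linearIndepOn_id
  have hmem : ∀ i, γ i ∈ hsub.extend (Set.subset_univ (Set.range γ)) := by
    intro i
    exact hsub.subset_extend _ ⟨i, rfl⟩
  set B := Module.Basis.extend hsub with hB
  refine ⟨fun i x => ((B.repr x ⟨γ i, hmem i⟩ : ℚ) : ℂ), ?_, ?_⟩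
  · intro i x y
    show ((B.repr (x + y) ⟨γ i, hmem i⟩ : ℚ) : ℂ)
      = ((B.repr x ⟨γ i, hmem i⟩ : ℚ) : ℂ) + ((B.repr y ⟨γ i, hmem i⟩ : ℚ) : ℂ)
    rw [map_add, Finsupp.add_apply]
    push_cast
    ring
  · intro i j
    have hγj : γ j = B ⟨γ j, hmem j⟩ := (Module.Basis.extend_apply_self hsub ⟨γ j, hmem j⟩).symm
    show ((B.repr (γ j) ⟨γ i, hmem i⟩ : ℚ) : ℂ) = _
    rw [hγj, B.repr_self, Finsupp.single_apply]
    have hiff : (⟨γ j, hmem j⟩ : ↥(hsub.extend (Set.subset_univ (Set.range γ))))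
        = ⟨γ i, hmem i⟩ ↔ i = j := by
      constructor
      · intro h
        exact hγ.injective (by simpa using (Subtype.ext_iff.mp h).symm)
      · intro h; subst h; rfl
    by_cases h : i = j
    · rw [if_pos (hiff.mpr h), if_pos h]; norm_num
    · rw [if_neg (fun hh => h (hiff.mp hh)), if_neg h]; norm_num
end Aux6

noncomputable section Aux7
open HahnSeries MvPolynomial

lemma no_annihilator {n : ℕ} (s : ℝ → ℂ) (hs : OmegaSupp s)
    (hrank : (n : Cardinal) < Module.rank ℚ (Submodule.span ℚ (suppG s)))
    (p : MvPolynomial (Fin (n+1)) ℂ) (hp : p ≠ 0) :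
    (MvPolynomial.aeval
      (fun κ : Fin (n+1) => Dhs^[(κ : ℕ)] (⟨s, isPWO_of_omega hs⟩ : Khs))) p ≠ 0 := by
  classical
  set S : Khs := (⟨s, isPWO_of_omega hs⟩ : Khs) with hSdef
  set w : Fin (n+1) → Khs := fun κ => Dhs^[(κ : ℕ)] S with hw
  intro hann
  -- pick n+1 linearly independent exponents in the support
  obtain ⟨b, hbsub, hbspan, hbli⟩ := exists_linearIndependent ℚ (suppG s)
  have hrank2 : (n : Cardinal) < Cardinal.mk b := by
    rw [← rank_span_set hbli, hbspan]; exact hrank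
  have hcard : Cardinal.mk (Fin (n+1)) ≤ Cardinal.mk b := by
    rw [Cardinal.mk_fin]
    push_cast
    exact (Cardinal.add_one_le_succ _).trans (Order.succ_le_of_lt hrank2)
  obtain ⟨e⟩ := (Cardinal.le_def _ _).mp hcard
  set γ : Fin (n+1) → ℝ := fun i => ((e i : b) : ℝ) with hγdef
  have hγsupp : ∀ i, s (γ i) ≠ 0 := fun i => hbsub (e i).2
  have hγ : LinearIndependent ℚ γ := hbli.comp e e.injective
  obtain ⟨Λ, hΛadd, hΛval⟩ := exists_dual_family γ hγ
  -- minimal annihilator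
  set T : Set ℕ :=
    {d | ∃ q : MvPolynomial (Fin (n+1)) ℂ, q ≠ 0 ∧ aeval w q = 0 ∧ q.totalDegree = d} with hT
  have hTne : T.Nonempty := ⟨p.totalDegree, p, hp, hann, rfl⟩
  obtain ⟨q, hq0, hqann, hqdeg⟩ := Nat.sInf_mem hTne
  -- q is not constant
  have hsupp_ne : ∃ ρ ∈ q.support, ρ ≠ 0 := by
    by_contra hall
    push_neg at hall
    have hqC : q = MvPolynomial.C (q.coeff 0) := by
      apply MvPolynomial.ext
      intro m
      rw [MvPolynomial.coeff_C]
      by_cases hm : m = 0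
      · subst hm; rw [if_pos rfl]
      · rw [if_neg (fun h => hm h.symm)]
        by_contra hc
        exact hm (hall m (MvPolynomial.mem_support_iff.mpr hc))
    rw [hqC, MvPolynomial.aeval_C] at hqann
    have hc0 : q.coeff 0 = 0 := by
      apply (algebraMap ℂ Khs).injective
      rw [hqann, map_zero]
    exact hq0 (by rw [hqC, hc0, map_zero])
  obtain ⟨ρs, hρmem, hρne⟩ := hsupp_ne
  obtain ⟨κ0, hκ0⟩ : ∃ κ, ρs κ ≠ 0 := by
    by_contra hno
    push_neg at hno
    exact hρne (Finsupp.ext fun κ => hno κ)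
  have hρcoeff : q.coeff ρs ≠ 0 := MvPolynomial.mem_support_iff.mp hρmem
  have hpd : MvPolynomial.pderiv κ0 q ≠ 0 := by
    intro h0
    have hcp := coeff_pderiv q κ0 (ρs - Finsupp.single κ0 1)
    have hle : Finsupp.single κ0 1 ≤ ρs := by
      rw [Finsupp.single_le_iff]; omega
    rw [h0, MvPolynomial.coeff_zero, tsub_add_cancel_of_le hle] at hcp
    rcases mul_eq_zero.mp hcp.symm with h2 | h3
    · exact Nat.cast_add_one_ne_zero _ h2
    · exact hρcoeff h3
  have hdeglt : (MvPolynomial.pderiv κ0 q).totalDegree < q.totalDegree := by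
    have hq1 : 1 ≤ q.totalDegree := by
      refine le_trans ?_ (MvPolynomial.le_totalDegree hρmem)
      have hmemk : κ0 ∈ ρs.support := Finsupp.mem_support_iff.mpr hκ0
      have : ρs κ0 ≤ ∑ a ∈ ρs.support, ρs a :=
        Finset.single_le_sum (fun i _ => Nat.zero_le _) hmemk
      calc 1 ≤ ρs κ0 := by omega
        _ ≤ ∑ a ∈ ρs.support, ρs a := this
        _ = ρs.sum fun _ e => e := rfl
    rw [MvPolynomial.totalDegree, Finset.sup_lt_iff
      (show (⊥ : ℕ) < q.totalDegree from lt_of_lt_of_le (by norm_num) hq1)]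
    intro τ hτ
    have hcoeff2 : q.coeff (τ + Finsupp.single κ0 1) ≠ 0 := by
      intro h0
      have hcp := coeff_pderiv q κ0 τ
      rw [h0, mul_zero] at hcp
      exact (MvPolynomial.mem_support_iff.mp hτ) hcp
    have hle2 := MvPolynomial.le_totalDegree (MvPolynomial.mem_support_iff.mpr hcoeff2)
    have hsum2 : ((τ + Finsupp.single κ0 1).sum fun _ e => e)
        = (τ.sum fun _ e => e) + 1 := by
      rw [Finsupp.sum_add_index' (fun _ => rfl) (fun _ _ _ => rfl),
        Finsupp.sum_single_index rfl]
    omega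
  set A : Fin (n+1) → Khs := fun κ => aeval w (MvPolynomial.pderiv κ q) with hA
  have hAκ0 : A κ0 ≠ 0 := by
    intro h0
    have hmem2 : (MvPolynomial.pderiv κ0 q).totalDegree ∈ T :=
      ⟨MvPolynomial.pderiv κ0 q, hpd, h0, rfl⟩
    have := Nat.sInf_le hmem2
    omega
  have hAne : A ≠ 0 := fun h => hAκ0 (by rw [h]; rfl)
  have hsolD : ∀ (δ : Khs → Khs), (∀ x y, δ (x + y) = δ x + δ y) →
      (∀ x y, δ (x * y) = δ x * y + x * δ y) →
      (∀ z, δ (algebraMap ℂ Khs z) = 0) → (∀ x, δ (Dhs x) = Dhs (δ x)) →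
      ∑ κ : Fin (n+1), A κ * Dhs^[(κ : ℕ)] (δ S) = 0 := by
    intro δ h1 h2 h3 h4
    have h5 := chain_rule δ h1 h2 h3 w q
    rw [hqann, deriv_zero' h1] at h5
    rw [show (∑ κ : Fin (n+1), A κ * Dhs^[(κ : ℕ)] (δ S))
        = ∑ κ : Fin (n+1), aeval w (MvPolynomial.pderiv κ q) * δ (w κ) from
      Finset.sum_congr rfl fun κ _ => by rw [hA, hw, comm_iterate h4]]
    exact h5.symm
  -- coefficient extraction for constant-coefficient relations
  have hcoeffsum : ∀ (g U : Fin (n+1) → Khs), (∀ i, Dhs (g i) = 0) →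
      (∑ i, g i * U i = 0) →
      ∀ a : ℝ, ∑ i, ((g i).coeff 0) * (U i).coeff a = 0 := by
    intro g U hg hsum a
    have h0 : (∑ i, g i * U i).coeff a = 0 := by rw [hsum]; rfl
    rw [_root_.coeff_sum] at h0
    rw [← h0]
    refine Finset.sum_congr rfl fun i _ => ?_
    have hterm : (g i * U i).coeff a = ((g i).coeff 0) * (U i).coeff a := by
      conv_lhs => rw [Dhs_const_eq (g i) (hg i)]
      rw [Cmul_coeff]
    rw [hterm]
  have hScoeff : ∀ a : ℝ, S.coeff a = s a := fun a => rfl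
  by_cases hq1all : ∀ i, Λ i 1 = 0
  · -- Case 1: all twists kill 1
    set U : Fin (n+1) → Khs := fun i => Dl (Λ i) S with hU
    have hCI : ConstIndep U := by
      intro g hg hsum j
      have hrelc := hcoeffsum g U hg hsum (γ j)
      have hsimp : ∀ i, ((g i).coeff 0) * (U i).coeff (γ j)
          = if i = j then ((g i).coeff 0) * s (γ j) else 0 := by
        intro i
        rw [hU]
        show ((g i).coeff 0) * (Dl (Λ i) S).coeff (γ j) = _
        rw [Dl_coeff, hΛval i j, hScoeff]
        by_cases h : i = j
        · rw [if_pos h, if_pos h, one_mul]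
        · rw [if_neg h, if_neg h, zero_mul, mul_zero]
      rw [Finset.sum_congr rfl fun i _ => hsimp i,
        Finset.sum_ite_eq' Finset.univ j (fun i => ((g i).coeff 0) * s (γ j)),
        if_pos (Finset.mem_univ j)] at hrelc
      have hβj : (g j).coeff 0 = 0 :=
        (mul_eq_zero.mp hrelc).resolve_right (hγsupp j)
      rw [Dhs_const_eq (g j) (hg j), hβj, map_zero]
    have hsol : ∀ i, ∑ κ : Fin (n+1), A κ * Dhs^[(κ : ℕ)] (U i) = 0 := by
      intro i
      exact hsolD (Dl (Λ i)) (Dl_add (Λ i)) (Dl_mul (Λ i) (hΛadd i))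
        (Dl_algebraMap (Λ i) (hΛadd i)) (fun x => Dl_Dhs_comm (Λ i) (hΛadd i) (hq1all i) x)
    exact no_common_kernel U hCI A hAne hsol
  · -- Case 2: some Λ i0 1 ≠ 0
    push_neg at hq1all
    obtain ⟨i0, hqi0⟩ := hq1all
    set l : Fin (n+1) → ℝ → ℂ := fun i x => Λ i x - (Λ i 1 / Λ i0 1) * Λ i0 x with hldef
    have hladd : ∀ i x y, l i (x + y) = l i x + l i y := by
      intro i x y
      show Λ i (x+y) - (Λ i 1 / Λ i0 1) * Λ i0 (x+y) = _
      rw [hΛadd i, hΛadd i0]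
      ring
    have hl1 : ∀ i, l i 1 = 0 := by
      intro i
      show Λ i 1 - (Λ i 1 / Λ i0 1) * Λ i0 1 = 0
      field_simp
      ring
    have hlval : ∀ i j, j ≠ i0 → l i (γ j) = if i = j then 1 else 0 := by
      intro i j hj
      show Λ i (γ j) - (Λ i 1 / Λ i0 1) * Λ i0 (γ j) = _
      rw [hΛval i j, hΛval i0 j,
        show (if i0 = j then (1:ℂ) else 0) = 0 from if_neg (fun h => hj h.symm),
        mul_zero, sub_zero]
    set U : Fin (n+1) → Khs := fun i => if i = i0 then Dhs S else Dl (l i) S with hU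
    have hUc : ∀ (i) (a : ℝ), (U i).coeff a
        = if i = i0 then ((a + 1 : ℝ) : ℂ) * s (a + 1) else l i a * s a := by
      intro i a
      rw [hU]
      by_cases hi : i = i0
      · show ((if i = i0 then Dhs S else Dl (l i) S) : Khs).coeff a = _
        rw [if_pos hi, if_pos hi, Dhs_coeff]
      · show ((if i = i0 then Dhs S else Dl (l i) S) : Khs).coeff a = _
        rw [if_neg hi, if_neg hi, Dl_coeff]
    have hsol : ∀ i, ∑ κ : Fin (n+1), A κ * Dhs^[(κ : ℕ)] (U i) = 0 := by
      intro i
      by_cases hi : i = i0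
      · have hUi : U i = Dhs S := by rw [hU]; show (if i = i0 then _ else _) = _; rw [if_pos hi]
        rw [hUi]
        exact hsolD Dhs Dhs_add Dhs_mul Dhs_algebraMap (fun x => rfl)
      · have hUi : U i = Dl (l i) S := by rw [hU]; show (if i = i0 then _ else _) = _; rw [if_neg hi]
        rw [hUi]
        exact hsolD (Dl (l i)) (Dl_add (l i)) (Dl_mul (l i) (hladd i))
          (Dl_algebraMap (l i) (hladd i)) (fun x => Dl_Dhs_comm (l i) (hladd i) (hl1 i) x)
    have hCI : ConstIndep U := by
      intro g hg hsum
      have hrelc := hcoeffsum g U hg hsum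
      set β : Fin (n+1) → ℂ := fun i => (g i).coeff 0 with hβ
      have hsplit : ∀ a : ℝ, β i0 * (((a + 1 : ℝ) : ℂ) * s (a + 1))
          + (∑ i ∈ Finset.univ.erase i0, β i * l i a) * s a = 0 := by
        intro a
        have h0 := hrelc a
        rw [← Finset.add_sum_erase _ _ (Finset.mem_univ i0)] at h0
        rw [hUc i0 a, if_pos rfl] at h0
        rw [show (∑ i ∈ Finset.univ.erase i0, β i * (U i).coeff a)
            = (∑ i ∈ Finset.univ.erase i0, β i * l i a) * s a from ?_] at h0
        · exact h0
        · rw [Finset.sum_mul]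
          refine Finset.sum_congr rfl fun i hi => ?_
          have hine : i ≠ i0 := Finset.ne_of_mem_erase hi
          rw [hUc i a, if_neg hine]
          ring
      by_cases hβ0 : β i0 = 0
      · intro j
        by_cases hj : j = i0
        · rw [Dhs_const_eq (g j) (hg j)]
          rw [show (g j).coeff 0 = β j from rfl, hj, hβ0, map_zero]
        · have h0 := hsplit (γ j)
          rw [hβ0, zero_mul, zero_add] at h0
          have hsum0 : (∑ i ∈ Finset.univ.erase i0, β i * l i (γ j)) = β j := by
            rw [show (∑ i ∈ Finset.univ.erase i0, β i * l i (γ j))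
                = ∑ i ∈ Finset.univ.erase i0, if i = j then β i else 0 from
              Finset.sum_congr rfl fun i hi => by
                rw [hlval i j hj]
                by_cases h : i = j
                · rw [if_pos h, if_pos h, mul_one]
                · rw [if_neg h, if_neg h, mul_zero]]
            rw [Finset.sum_ite_eq' _ j (fun i => β i),
              if_pos (Finset.mem_erase.mpr ⟨hj, Finset.mem_univ j⟩)]
          rw [hsum0] at h0
          have hβj : β j = 0 := (mul_eq_zero.mp h0).resolve_right (hγsupp j)
          rw [Dhs_const_eq (g j) (hg j)]
          rw [show (g j).coeff 0 = β j from rfl, hβj, map_zero]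
      · exfalso
        set lstar : ℝ → ℂ :=
          fun a => -(β i0)⁻¹ * ∑ i ∈ Finset.univ.erase i0, β i * l i a with hls
        have hrel : ∀ a : ℝ, ((a + 1 : ℝ) : ℂ) * s (a + 1) = lstar a * s a := by
          intro a
          have h1 : β i0 * (((a + 1 : ℝ) : ℂ) * s (a + 1))
              = -((∑ i ∈ Finset.univ.erase i0, β i * l i a) * s a) :=
            eq_neg_of_add_eq_zero_left (hsplit a)
          have h2 : ((a + 1 : ℝ) : ℂ) * s (a + 1)
              = (β i0)⁻¹ * (β i0 * (((a + 1 : ℝ) : ℂ) * s (a + 1))) := by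
            rw [← mul_assoc, inv_mul_cancel₀ hβ0, one_mul]
          rw [h2, h1, hls]
          ring
        rcases Nat.eq_zero_or_pos n with hn0 | hn1
        · subst hn0
          have herase : (Finset.univ.erase i0 : Finset (Fin 1)) = ∅ := by
            ext x
            simp [Subsingleton.elim x i0]
          have hγ0 : γ 0 ≠ 0 := hγ.ne_zero 0
          have h3 := hrel (γ 0 - 1)
          rw [sub_add_cancel] at h3
          simp only [hls, herase, Finset.sum_empty, mul_zero, zero_mul] at h3
          rcases mul_eq_zero.mp h3 with h4 | h5
          · exact hγ0 (by exact_mod_cast h4)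
          · exact hγsupp 0 h5
        · have hdesc := fun i => descent_nat s hs lstar hrel (γ i) (hγsupp i)
          choose m hm using hdesc
          exact natcast_not_indep hn1 γ hγ m hm
    exact no_common_kernel U hCI A hAne hsol
end Aux7

noncomputable section Aux8
open HahnSeries

lemma evalP_coeff {n : ℕ} (c : (Fin (n+1) →₀ ℕ) → ℂ) (hc : (Function.support c).Finite)
    (V : Fin (n+1) → Khs) (a : ℝ) :
    evalP (fun ρ => monomialG (c ρ) 0) (fun κ => (V κ).coeff) a
      = (MvPolynomial.aeval V
          (∑ ρ ∈ hc.toFinset, MvPolynomial.monomial ρ (c ρ))).coeff a := by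
  classical
  have h1 : ∀ ρ : Fin (n+1) →₀ ℕ,
      mulG (monomialG (c ρ) 0) (prodPow (fun κ => (V κ).coeff) ρ) a
      = c ρ * (∏ κ : Fin (n+1), V κ ^ ρ κ).coeff a := by
    intro ρ
    rw [prodPow_coeff]
    rw [show mulG (monomialG (c ρ) 0) ((∏ κ : Fin (n+1), V κ ^ ρ κ).coeff) a
        = ∑ᶠ b : ℝ, monomialG (c ρ) 0 b * (∏ κ : Fin (n+1), V κ ^ ρ κ).coeff (a - b) from rfl]
    rw [finsum_eq_single _ (0 : ℝ) ?_]
    · simp [monomialG]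
    · intro b hb
      simp [monomialG, hb]
  rw [show evalP (fun ρ => monomialG (c ρ) 0) (fun κ => (V κ).coeff) a
      = ∑ᶠ ρ : Fin (n+1) →₀ ℕ,
          mulG (monomialG (c ρ) 0) (prodPow (fun κ => (V κ).coeff) ρ) a from rfl]
  rw [finsum_congr h1]
  rw [finsum_eq_finset_sum_of_support_subset _ (s := hc.toFinset) ?_]
  · rw [map_sum, _root_.coeff_sum]
    refine Finset.sum_congr rfl fun ρ _ => ?_
    rw [MvPolynomial.aeval_monomial,
      show (ρ.prod fun k e => V k ^ e) = ∏ κ : Fin (n+1), V κ ^ ρ κ from Finsupp.prod_pow ρ V,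
      Cmul_coeff]
  · intro ρ hρ
    have : c ρ ≠ 0 := by
      intro h0
      apply hρ
      show c ρ * _ = 0
      rw [h0, zero_mul]
    exact (Set.Finite.mem_toFinset hc).mpr this

end Aux8

/-- a series with `dim_ℚ ⟨supp s⟩ > n` solves no nontrivial
order-`n` ODE with constant coefficients. -/
theorem stmt7 (n : ℕ) (s : ℝ → ℂ) (hs : OmegaSupp s)
    (hrank : (n : Cardinal) < Module.rank ℚ (Submodule.span ℚ (suppG s))) :
    ∀ c : (Fin (n+1) →₀ ℕ) → ℂ, (Function.support c).Finite → c ≠ 0 →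
      evalP (fun ρ => monomialG (c ρ) 0)
        (fun κ : Fin (n+1) => (Dop (fun a => (a : ℂ)) 1)^[(κ : ℕ)] s) ≠ 0 := by
  classical
  intro c hc hcne
  set S : Khs := (⟨s, isPWO_of_omega hs⟩ : Khs) with hS
  have hdop : ∀ k : ℕ, (Dop (fun a => (a : ℂ)) 1)^[k] s = (Dhs^[k] S).coeff := by
    intro k
    induction k with
    | zero => rfl
    | succ k ih =>
        rw [Function.iterate_succ_apply', Function.iterate_succ_apply', ih]
        rfl
  set V : Fin (n+1) → Khs := fun κ => Dhs^[(κ : ℕ)] S with hV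
  have hv : (fun κ : Fin (n+1) => (Dop (fun a => (a : ℂ)) 1)^[(κ : ℕ)] s)
      = fun κ => (V κ).coeff := by
    funext κ
    rw [hdop]
  rw [hv]
  set pq : MvPolynomial (Fin (n+1)) ℂ :=
    ∑ ρ ∈ hc.toFinset, MvPolynomial.monomial ρ (c ρ) with hpq
  have hpqne : pq ≠ 0 := by
    obtain ⟨ρ0, hρ0⟩ : ∃ ρ, c ρ ≠ 0 := by
      by_contra hno
      push_neg at hno
      exact hcne (funext hno)
    intro h0
    have hco : MvPolynomial.coeff ρ0 pq = c ρ0 := by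
      rw [hpq, MvPolynomial.coeff_sum, Finset.sum_eq_single ρ0]
      · rw [MvPolynomial.coeff_monomial, if_pos rfl]
      · intro ρ _ hne
        rw [MvPolynomial.coeff_monomial, if_neg hne]
      · intro hnm
        exact absurd ((Set.Finite.mem_toFinset hc).mpr hρ0) hnm
    rw [h0, MvPolynomial.coeff_zero] at hco
    exact hρ0 hco.symm
  intro h0
  have hzero : MvPolynomial.aeval V pq = 0 := by
    apply HahnSeries.coeff_injective
    funext a
    have := evalP_coeff c hc V a
    rw [← hpq] at this
    rw [← this, h0]
    rfl
  exact no_annihilator s hs hrank pq hpqne hzero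
end

section
/- The series x + x^π is not a solution of any nontrivial first-order equation P(y₀, y₁) = 0 with P ∈ ℂ[y₀,y₁] nonzero, where y₁ denotes either the derivative y' or the Euler derivative x·y' of y. -/
open Classical Filter

noncomputable section
namespace Stmt8Aux
open Function Pointwise

def T (s : ℝ → ℂ) (f : ℝ → ℂ) : ℂ := ∑ᶠ a, f a * s a

lemma support_mulG (f g : ℝ → ℂ) :
    support (mulG f g) ⊆ Set.image2 (· + ·) (support f) (support g) := by
  intro a ha
  simp only [mulG, mem_support] at ha
  have : ∃ b, f b * g (a - b) ≠ 0 := by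
    by_contra h
    push_neg at h
    exact ha (finsum_eq_zero_of_forall_eq_zero (by simpa using h))
  obtain ⟨b, hb⟩ := this
  exact ⟨b, fun hf => hb (by simp [hf]), a - b, fun hg => hb (by simp [hg]), by ring⟩

lemma finS_mulG {f g : ℝ → ℂ} (hf : (support f).Finite) (hg : (support g).Finite) :
    (support (mulG f g)).Finite :=
  (hf.image2 _ hg).subset (support_mulG f g)

lemma finS_oneG : (support oneG).Finite := by
  apply Set.Finite.subset (Set.finite_singleton 0)
  intro a ha
  simp only [oneG, mem_support] at ha
  by_contra h; exact ha (if_neg h)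

lemma finS_powG {f : ℝ → ℂ} (hf : (support f).Finite) (k : ℕ) :
    (support (powG f k)).Finite := by
  induction k with
  | zero => exact finS_oneG
  | succ k ih => exact finS_mulG hf ih

lemma T_one (s : ℝ → ℂ) (h0 : s 0 = 1) : T s oneG = 1 := by
  have : T s oneG = oneG 0 * s 0 := by
    apply finsum_eq_single
    intro x hx
    simp [oneG, if_neg hx]
  simp [this, oneG, h0]

lemma T_mul (s : ℝ → ℂ) (hadd : ∀ x y, s (x + y) = s x * s y)
    {f g : ℝ → ℂ} (hf : (support f).Finite) (hg : (support g).Finite) :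
    T s (mulG f g) = T s f * T s g := by
  classical
  set Sf := hf.toFinset with hSf
  set Sg := hg.toFinset with hSg
  have hmul : ∀ a, mulG f g a = ∑ b ∈ Sf, f b * g (a - b) := by
    intro a
    apply finsum_eq_sum_of_support_subset
    intro b hb
    have : f b ≠ 0 := fun h => by simp [h] at hb
    simpa [hSf] using this
  have houter : support (fun a => mulG f g a * s a) ⊆ ↑(Sf + Sg) := by
    intro a ha
    have : mulG f g a ≠ 0 := fun h => by simp [h] at ha
    have := support_mulG f g this
    obtain ⟨b, hb, cc, hcc, rfl⟩ := this
    rw [Finset.coe_add]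
    exact ⟨b, by simpa [hSf] using hb, cc, by simpa [hSg] using hcc, rfl⟩
  calc T s (mulG f g) = ∑ a ∈ Sf + Sg, mulG f g a * s a :=
        finsum_eq_sum_of_support_subset _ houter
    _ = ∑ a ∈ Sf + Sg, ∑ b ∈ Sf, f b * g (a - b) * s a := by
        refine Finset.sum_congr rfl fun a _ => ?_
        rw [hmul a, Finset.sum_mul]
    _ = ∑ b ∈ Sf, ∑ a ∈ Sf + Sg, f b * g (a - b) * s a := Finset.sum_comm
    _ = ∑ b ∈ Sf, f b * s b * T s g := by
        refine Finset.sum_congr rfl fun b hb => ?_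
        have hbf : f b ≠ 0 := by simpa [hSf] using (hf.mem_toFinset.1 hb)
        have hsub : support (fun a => f b * g (a - b) * s a) ⊆ ↑(Sf + Sg) := by
          intro a ha
          have hga : g (a - b) ≠ 0 := fun h => by simp [h] at ha
          rw [Finset.coe_add]
          exact ⟨b, by simpa [hSf] using hbf, a - b,
            by simpa [hSg] using hga, by ring⟩
        have h1 : ∑ a ∈ Sf + Sg, f b * g (a - b) * s a
            = ∑ᶠ a, f b * g (a - b) * s a :=
          (finsum_eq_sum_of_support_subset _ hsub).symm
        have h2 : ∑ᶠ a, f b * g (a - b) * s a = ∑ᶠ cc, f b * g cc * s (b + cc) := by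
          rw [← finsum_comp_equiv (Equiv.addLeft b)]
          refine finsum_congr fun cc => ?_
          simp [Equiv.addLeft]
        have h3 : ∑ᶠ cc, f b * g cc * s (b + cc) = f b * s b * T s g := by
          have hfin : (support fun cc => g cc * s cc).Finite :=
            hg.subset (fun x hx => by
              simp only [mem_support] at hx ⊢
              intro h; apply hx; simp [h])
          rw [T, mul_finsum' _ _ hfin]
          refine finsum_congr fun cc => ?_
          rw [hadd]; ring
        rw [h1, h2, h3]
    _ = T s f * T s g := by
        rw [T, ← Finset.sum_mul]
        congr 1
        exact (finsum_eq_sum_of_support_subset _ (by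
          intro a ha
          have : f a ≠ 0 := fun h => by simp [h] at ha
          simpa [hSf] using this)).symm

lemma T_pow (s : ℝ → ℂ) (h0 : s 0 = 1) (hadd : ∀ x y, s (x + y) = s x * s y)
    {f : ℝ → ℂ} (hf : (support f).Finite) (k : ℕ) :
    T s (powG f k) = (T s f) ^ k := by
  induction k with
  | zero => simpa [powG] using T_one s h0
  | succ k ih => rw [powG, T_mul s hadd hf (finS_powG hf k), ih, pow_succ]; ring

lemma prodPow_eq (v : Fin 2 → (ℝ → ℂ)) (ρ : Fin 2 →₀ ℕ) :
    prodPow (n := 1) v ρ = mulG (powG (v 0) (ρ 0)) (mulG (powG (v 1) (ρ 1)) oneG) := by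
  simp [prodPow, List.ofFn_succ]

lemma finS_prodPow {v : Fin 2 → (ℝ → ℂ)} (hv : ∀ κ, (support (v κ)).Finite)
    (ρ : Fin 2 →₀ ℕ) : (support (prodPow (n := 1) v ρ)).Finite := by
  rw [prodPow_eq]
  exact finS_mulG (finS_powG (hv 0) _) (finS_mulG (finS_powG (hv 1) _) finS_oneG)

lemma T_prodPow (s : ℝ → ℂ) (h0 : s 0 = 1) (hadd : ∀ x y, s (x + y) = s x * s y)
    {v : Fin 2 → (ℝ → ℂ)} (hv : ∀ κ, (support (v κ)).Finite) (ρ : Fin 2 →₀ ℕ) :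
    T s (prodPow (n := 1) v ρ) = (T s (v 0)) ^ (ρ 0) * (T s (v 1)) ^ (ρ 1) := by
  rw [prodPow_eq,
    T_mul s hadd (finS_powG (hv 0) _) (finS_mulG (finS_powG (hv 1) _) finS_oneG),
    T_mul s hadd (finS_powG (hv 1) _) finS_oneG, T_one s h0,
    T_pow s h0 hadd (hv 0), T_pow s h0 hadd (hv 1)]
  ring

lemma mulG_monomial_zero (d : ℂ) (h : ℝ → ℂ) :
    mulG (monomialG d 0) h = fun a => d * h a := by
  funext a
  have : mulG (monomialG d 0) h a = monomialG d 0 0 * h (a - 0) := by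
    apply finsum_eq_single
    intro x hx
    simp [monomialG, if_neg hx]
  simp [this, monomialG]

lemma T_evalP (s : ℝ → ℂ) (h0 : s 0 = 1) (hadd : ∀ x y, s (x + y) = s x * s y)
    (c : (Fin 2 →₀ ℕ) → ℂ) (hc : (support c).Finite)
    {v : Fin 2 → (ℝ → ℂ)} (hv : ∀ κ, (support (v κ)).Finite) :
    T s (evalP (n := 1) (fun ρ => monomialG (c ρ) 0) v)
      = ∑ ρ ∈ hc.toFinset, c ρ * (T s (v 0)) ^ (ρ 0) * (T s (v 1)) ^ (ρ 1) := by
  classical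
  have hev : evalP (n := 1) (fun ρ => monomialG (c ρ) 0) v
      = fun a => ∑ ρ ∈ hc.toFinset, c ρ * prodPow v ρ a := by
    funext a
    rw [evalP]
    rw [finsum_congr (fun ρ => by
      rw [mulG_monomial_zero (c ρ) (prodPow v ρ)] :
      ∀ ρ : Fin 2 →₀ ℕ, mulG (monomialG (c ρ) 0) (prodPow v ρ) a
        = c ρ * prodPow v ρ a)]
    apply finsum_eq_sum_of_support_subset
    intro ρ hρ
    have : c ρ ≠ 0 := fun h => by simp [h] at hρ
    simpa using this
  rw [hev, T]
  have step : ∀ a : ℝ, (∑ ρ ∈ hc.toFinset, c ρ * prodPow v ρ a) * s a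
      = ∑ ρ ∈ hc.toFinset, c ρ * prodPow v ρ a * s a := fun a => Finset.sum_mul _ _ _
  rw [finsum_congr step, finsum_sum_comm _ _ (fun ρ _ =>
    (finS_prodPow hv ρ).subset (fun a ha => by
      simp only [mem_support] at ha ⊢
      intro h; exact ha (by simp [h])))]
  refine Finset.sum_congr rfl fun ρ _ => ?_
  have : ∑ᶠ a, c ρ * prodPow v ρ a * s a = c ρ * ∑ᶠ a, prodPow v ρ a * s a := by
    rw [mul_finsum' _ _ ((finS_prodPow hv ρ).subset (fun a ha => by
      simp only [mem_support] at ha ⊢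
      intro h; exact ha (by simp [h])))]
    exact finsum_congr fun a => by ring
  rw [this]
  rw [show (∑ᶠ a, prodPow v ρ a * s a) = T s (prodPow (n := 1) v ρ) from rfl,
    T_prodPow s h0 hadd hv ρ]
  ring

lemma pi_ne_one : Real.pi ≠ 1 := by
  have := Real.pi_gt_three; linarith

lemma li_one_pi : LinearIndependent ℚ ((↑) : ({1, Real.pi} : Set ℝ) → ℝ) := by
  have h2 : LinearIndependent ℚ ![(1 : ℝ), Real.pi] := by
    rw [LinearIndependent.pair_iff]
    intro q r h
    rcases eq_or_ne r 0 with hr | hr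
    · subst hr
      refine ⟨?_, rfl⟩
      have hq : (q : ℝ) = 0 := by simpa [Rat.smul_def] using h
      exact_mod_cast hq
    · exfalso
      apply irrational_pi
      refine ⟨-q / r, ?_⟩
      have hq : (q : ℝ) + (r : ℝ) * Real.pi = 0 := by
        simpa [Rat.smul_def] using h
      have hr' : (r : ℝ) ≠ 0 := by exact_mod_cast hr
      push_cast
      field_simp
      linarith [hq]
  have := (linearIndepOn_id_range_iff h2.injective).mpr h2
  have hr : Set.range ![(1 : ℝ), Real.pi] = {1, Real.pi} := by
    ext x
    simp [Matrix.range_cons, Matrix.range_empty, or_comm]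
  rwa [hr] at this

lemma exists_char (u v : ℂ) (hu : u ≠ 0) (hv : v ≠ 0) :
    ∃ s : ℝ → ℂ, s 0 = 1 ∧ (∀ x y, s (x + y) = s x * s y) ∧ s 1 = u ∧ s Real.pi = v := by
  classical
  have hli : LinearIndepOn ℚ id ({1, Real.pi} : Set ℝ) := li_one_pi
  set B := Module.Basis.extend hli with hB
  set g : hli.extend (Set.subset_univ _) → ℂ :=
    fun i => if (i : ℝ) = 1 then Complex.log u else
      if (i : ℝ) = Real.pi then Complex.log v else 0 with hg
  set ℓ : ℝ →ₗ[ℚ] ℂ := B.constr ℚ g with hℓ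
  refine ⟨fun x => Complex.exp (ℓ x), ?_, ?_, ?_, ?_⟩
  · simp
  · intro x y
    show Complex.exp (ℓ (x + y)) = Complex.exp (ℓ x) * Complex.exp (ℓ y)
    rw [map_add, Complex.exp_add]
  · have h1 : (1 : ℝ) ∈ hli.extend (Set.subset_univ _) :=
      hli.subset_extend _ (by simp)
    have : ℓ 1 = g ⟨1, h1⟩ := by
      conv_lhs => rw [show (1 : ℝ) = B ⟨1, h1⟩ from (Module.Basis.extend_apply_self hli ⟨1, h1⟩).symm]
      exact B.constr_basis ℚ g ⟨1, h1⟩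
    show Complex.exp (ℓ 1) = u
    rw [this, hg]
    simp only [if_pos rfl]
    exact Complex.exp_log hu
  · have h1 : Real.pi ∈ hli.extend (Set.subset_univ _) :=
      hli.subset_extend _ (by simp)
    have : ℓ Real.pi = g ⟨Real.pi, h1⟩ := by
      conv_lhs => rw [show Real.pi = B ⟨Real.pi, h1⟩ from (Module.Basis.extend_apply_self hli ⟨Real.pi, h1⟩).symm]
      exact B.constr_basis ℚ g ⟨Real.pi, h1⟩
    show Complex.exp (ℓ Real.pi) = v
    rw [this, hg]
    simp only [if_neg pi_ne_one, if_pos rfl]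
    exact Complex.exp_log hv

lemma vanish (c : (Fin 2 →₀ ℕ) → ℂ) (hc : (Function.support c).Finite)
    (Z0 : Set ℂ) (hZ0 : Z0.Finite) (Z1 : ℂ → Set ℂ) (hZ1 : ∀ y, (Z1 y).Finite)
    (H : ∀ y0, y0 ∉ Z0 → ∀ y1, y1 ∉ Z1 y0 →
      ∑ ρ ∈ hc.toFinset, c ρ * y0 ^ (ρ 0) * y1 ^ (ρ 1) = 0) :
    c = 0 := by
  classical
  funext ρh
  show c ρh = 0
  by_contra hne
  have step1 : ∀ y0, y0 ∉ Z0 →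
      ∑ ρ ∈ hc.toFinset, c ρ * y0 ^ (ρ 0) * (if ρh 1 = ρ 1 then 1 else 0) = 0 := by
    intro y0 hy0
    set p : Polynomial ℂ :=
      ∑ ρ ∈ hc.toFinset, Polynomial.C (c ρ * y0 ^ (ρ 0)) * Polynomial.X ^ (ρ 1) with hp
    have heval : ∀ z, p.eval z = ∑ ρ ∈ hc.toFinset, c ρ * y0 ^ (ρ 0) * z ^ (ρ 1) := by
      intro z; simp [hp, Polynomial.eval_finset_sum]
    have hp0 : p = 0 := by
      apply Polynomial.eq_zero_of_infinite_isRoot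
      apply Set.Infinite.mono (s := (Z1 y0)ᶜ) ?_ ((hZ1 y0).infinite_compl)
      intro z hz
      simpa [Polynomial.IsRoot, heval] using H y0 hy0 z hz
    have hcoeff := congrArg (fun q : Polynomial ℂ => q.coeff (ρh 1)) hp0
    have hc1 : p.coeff (ρh 1)
        = ∑ ρ ∈ hc.toFinset, c ρ * y0 ^ (ρ 0) * (if ρh 1 = ρ 1 then 1 else 0) := by
      rw [hp, Polynomial.finset_sum_coeff]
      refine Finset.sum_congr rfl fun ρ _ => ?_
      rw [Polynomial.coeff_C_mul, Polynomial.coeff_X_pow]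
    simpa [hc1] using hcoeff
  have step2 : ∑ ρ ∈ hc.toFinset,
      c ρ * (if ρh 1 = ρ 1 then 1 else 0) * (if ρh 0 = ρ 0 then (1:ℂ) else 0) = 0 := by
    set q : Polynomial ℂ :=
      ∑ ρ ∈ hc.toFinset,
        Polynomial.C (c ρ * (if ρh 1 = ρ 1 then 1 else 0)) * Polynomial.X ^ (ρ 0) with hq
    have heval : ∀ z, q.eval z
        = ∑ ρ ∈ hc.toFinset, c ρ * z ^ (ρ 0) * (if ρh 1 = ρ 1 then 1 else 0) := by
      intro z; rw [hq, Polynomial.eval_finset_sum]; refine Finset.sum_congr rfl fun ρ _ => ?_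
      simp only [Polynomial.eval_mul, Polynomial.eval_C, Polynomial.eval_pow,
        Polynomial.eval_X]
      ring
    have hq0 : q = 0 := by
      apply Polynomial.eq_zero_of_infinite_isRoot
      apply Set.Infinite.mono (s := Z0ᶜ) ?_ (hZ0.infinite_compl)
      intro z hz
      simpa [Polynomial.IsRoot, heval] using step1 z hz
    have hcoeff := congrArg (fun r : Polynomial ℂ => r.coeff (ρh 0)) hq0
    have hc1 : q.coeff (ρh 0)
        = ∑ ρ ∈ hc.toFinset,
            c ρ * (if ρh 1 = ρ 1 then 1 else 0) * (if ρh 0 = ρ 0 then (1:ℂ) else 0) := by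
      rw [hq, Polynomial.finset_sum_coeff]
      refine Finset.sum_congr rfl fun ρ _ => ?_
      rw [Polynomial.coeff_C_mul, Polynomial.coeff_X_pow]
    simpa [hc1] using hcoeff
  have hsum : ∑ ρ ∈ hc.toFinset,
      c ρ * (if ρh 1 = ρ 1 then 1 else 0) * (if ρh 0 = ρ 0 then (1:ℂ) else 0) = c ρh := by
    rw [Finset.sum_eq_single ρh]
    · simp
    · intro ρ _ hρ
      rcases (by
        by_contra hcon
        push_neg at hcon
        apply hρ
        ext κ
        have h2 : ∀ κ : Fin 2, κ = 0 ∨ κ = 1 := by decide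
        rcases h2 κ with h | h <;> subst h <;> omega
        : ¬ (ρh 1 = ρ 1) ∨ ¬ (ρh 0 = ρ 0)) with h | h
      · simp [h]
      · simp [h]
    · intro h
      exact absurd (hc.mem_toFinset.2 hne) h
  rw [hsum] at step2
  exact hne step2

/-- The series `x + x^π` as a coefficient function. -/
def f0 : ℝ → ℂ := fun a => if a = 1 ∨ a = Real.pi then 1 else 0

lemma finS_f0 : (support f0).Finite := by
  apply Set.Finite.subset ((Set.finite_singleton Real.pi).insert (1:ℝ))
  intro a ha
  simp only [f0, mem_support] at ha
  by_contra h
  simp only [Set.mem_insert_iff, Set.mem_singleton_iff] at h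
  push_neg at h
  exact ha (if_neg (by tauto))

lemma finS_Dop (dd : ℝ → ℂ) (ε : ℝ) {f : ℝ → ℂ} (hf : (support f).Finite) :
    (support (Dop dd ε f)).Finite := by
  apply (hf.image (fun a => a - ε)).subset
  intro a ha
  simp only [Dop, mem_support] at ha
  have : f (a + ε) ≠ 0 := fun hh => ha (by simp [hh])
  exact ⟨a + ε, this, by ring⟩

lemma T_f0 (s : ℝ → ℂ) : T s f0 = s 1 + s Real.pi := by
  have hne : (1 : ℝ) ≠ Real.pi := Ne.symm pi_ne_one
  have h : T s f0 = ∑ a ∈ ({1, Real.pi} : Finset ℝ), f0 a * s a := by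
    apply finsum_eq_sum_of_support_subset
    intro a ha
    have hfa : f0 a ≠ 0 := fun h => by simp [h] at ha
    simp only [f0] at hfa
    simp only [Finset.coe_insert, Finset.coe_singleton, Set.mem_insert_iff,
      Set.mem_singleton_iff]
    by_contra hmem
    push_neg at hmem
    exact hfa (if_neg (by tauto))
  rw [h, Finset.sum_pair hne]
  simp [f0]

lemma T_Dop_ord (s : ℝ → ℂ) : T s (Dop (fun a : ℝ => (a:ℂ)) 1 f0)
    = s 0 + (Real.pi : ℂ) * s (Real.pi - 1) := by
  have hne : (0 : ℝ) ≠ Real.pi - 1 := by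
    intro hcon; exact pi_ne_one (by linarith)
  have hsum : T s (Dop (fun a : ℝ => (a:ℂ)) 1 f0)
      = ∑ a ∈ ({0, Real.pi - 1} : Finset ℝ), Dop (fun a : ℝ => (a:ℂ)) 1 f0 a * s a := by
    apply finsum_eq_sum_of_support_subset
    intro a ha
    simp only [mem_support] at ha
    have h1 : f0 (a + 1) ≠ 0 := by
      intro hcon
      exact ha (by simp [Dop, hcon])
    simp only [f0] at h1
    have h2 : a + 1 = 1 ∨ a + 1 = Real.pi := by
      by_contra hcon; push_neg at hcon
      exact h1 (if_neg (by tauto))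
    simp only [Finset.coe_insert, Finset.coe_singleton, Set.mem_insert_iff,
      Set.mem_singleton_iff]
    rcases h2 with h | h
    · left; linarith
    · right; linarith
  rw [hsum, Finset.sum_pair hne]
  have e1 : Dop (fun a : ℝ => (a:ℂ)) 1 f0 0 = 1 := by
    simp [Dop, f0]
  have e2 : Dop (fun a : ℝ => (a:ℂ)) 1 f0 (Real.pi - 1) = (Real.pi : ℂ) := by
    simp [Dop, f0, pi_ne_one]
  rw [e1, e2]; ring

lemma T_Dop_eul (s : ℝ → ℂ) : T s (Dop (fun a : ℝ => (a:ℂ)) 0 f0)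
    = s 1 + (Real.pi : ℂ) * s Real.pi := by
  have hne : (1 : ℝ) ≠ Real.pi := Ne.symm pi_ne_one
  have hsum : T s (Dop (fun a : ℝ => (a:ℂ)) 0 f0)
      = ∑ a ∈ ({1, Real.pi} : Finset ℝ), Dop (fun a : ℝ => (a:ℂ)) 0 f0 a * s a := by
    apply finsum_eq_sum_of_support_subset
    intro a ha
    simp only [mem_support] at ha
    have h1 : f0 a ≠ 0 := by
      intro hcon
      exact ha (by simp [Dop, hcon])
    simp only [f0] at h1
    have h2 : a = 1 ∨ a = Real.pi := by
      by_contra hcon; push_neg at hcon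
      exact h1 (if_neg (by tauto))
    simpa using h2
  rw [hsum, Finset.sum_pair hne]
  have e1 : Dop (fun a : ℝ => (a:ℂ)) 0 f0 1 = 1 := by
    simp [Dop, f0]
  have e2 : Dop (fun a : ℝ => (a:ℂ)) 0 f0 Real.pi = (Real.pi : ℂ) := by
    simp [Dop, f0]
  rw [e1, e2]; ring

end Stmt8Aux

end

/-- `x + x^π` solves no nontrivial first-order constant-coefficient
equation, for the ordinary or the Euler derivative. -/
theorem stmt8 :
    ∀ c : (Fin 2 →₀ ℕ) → ℂ, (Function.support c).Finite → c ≠ 0 →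
      (evalP (n := 1) (fun ρ => monomialG (c ρ) 0)
        (fun κ : Fin 2 => (Dop (fun a => (a : ℂ)) 1)^[(κ : ℕ)]
          (fun a => if a = 1 ∨ a = Real.pi then 1 else 0)) ≠ 0) ∧
      (evalP (n := 1) (fun ρ => monomialG (c ρ) 0)
        (fun κ : Fin 2 => (Dop (fun a => (a : ℂ)) 0)^[(κ : ℕ)]
          (fun a => if a = 1 ∨ a = Real.pi then 1 else 0)) ≠ 0) := by
  intro c hc hc0
  have hvO : ∀ κ : Fin 2, (Function.support
      ((Dop (fun a : ℝ => (a:ℂ)) 1)^[(κ : ℕ)] Stmt8Aux.f0)).Finite := by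
    intro κ
    fin_cases κ
    · exact Stmt8Aux.finS_f0
    · exact Stmt8Aux.finS_Dop _ _ Stmt8Aux.finS_f0
  have hvE : ∀ κ : Fin 2, (Function.support
      ((Dop (fun a : ℝ => (a:ℂ)) 0)^[(κ : ℕ)] Stmt8Aux.f0)).Finite := by
    intro κ
    fin_cases κ
    · exact Stmt8Aux.finS_f0
    · exact Stmt8Aux.finS_Dop _ _ Stmt8Aux.finS_f0
  constructor
  · -- ordinary derivative
    intro h
    apply hc0
    have h' : evalP (n := 1) (fun ρ => monomialG (c ρ) 0)
        (fun κ : Fin 2 => (Dop (fun a : ℝ => (a:ℂ)) 1)^[(κ : ℕ)] Stmt8Aux.f0) = 0 := h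
    apply Stmt8Aux.vanish c hc {0} (Set.finite_singleton 0)
      (fun _ => {1, 1 - (Real.pi : ℂ)})
      (fun y => (Set.finite_singleton _).insert _)
    intro y0 hy0 y1 hy1
    simp only [Set.mem_singleton_iff] at hy0
    simp only [Set.mem_insert_iff, Set.mem_singleton_iff] at hy1
    push_neg at hy1
    obtain ⟨hy11, hy12⟩ := hy1
    have hπ : ((Real.pi : ℝ) : ℂ) ≠ 0 := by
      simpa using Real.pi_ne_zero
    set w : ℂ := (y1 - 1) / (Real.pi : ℂ) with hw_def
    have hw : w ≠ 0 := div_ne_zero (sub_ne_zero.mpr hy11) hπ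
    have h1w : (1 : ℂ) + w ≠ 0 := by
      intro hcon
      apply hy12
      have hwm : w = -1 := by linear_combination hcon
      rw [hw_def] at hwm
      field_simp at hwm
      linear_combination hwm
    set u : ℂ := y0 / (1 + w) with hu_def
    have hu : u ≠ 0 := div_ne_zero hy0 h1w
    set vv : ℂ := w * u with hvv_def
    have hvv : vv ≠ 0 := mul_ne_zero hw hu
    obtain ⟨s, hs0, hsadd, hs1, hspi⟩ := Stmt8Aux.exists_char u vv hu hvv
    have hT := Stmt8Aux.T_evalP s hs0 hsadd c hc hvO
    rw [h'] at hT
    rw [show Stmt8Aux.T s 0 = 0 from by simp [Stmt8Aux.T],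
      show ((Dop (fun a : ℝ => (a:ℂ)) 1)^[((0 : Fin 2) : ℕ)] Stmt8Aux.f0)
        = Stmt8Aux.f0 from rfl,
      show ((Dop (fun a : ℝ => (a:ℂ)) 1)^[((1 : Fin 2) : ℕ)] Stmt8Aux.f0)
        = Dop (fun a : ℝ => (a:ℂ)) 1 Stmt8Aux.f0 from rfl,
      Stmt8Aux.T_f0, Stmt8Aux.T_Dop_ord, hs0, hs1, hspi] at hT
    have hspi1 : s (Real.pi - 1) = vv / u := by
      have hmul : s (Real.pi - 1) * s 1 = s Real.pi := by
        rw [← hsadd]; norm_num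
      rw [hs1, hspi] at hmul
      rw [eq_div_iff hu]
      exact hmul
    rw [hspi1] at hT
    have hA : u + vv = y0 := by
      rw [hvv_def, hu_def]
      field_simp
    have hB : 1 + (Real.pi : ℂ) * (vv / u) = y1 := by
      rw [hvv_def, mul_div_assoc, div_self hu, mul_one, hw_def]
      field_simp
      ring
    rw [hA, hB] at hT
    exact hT.symm
  · -- Euler derivative
    intro h
    apply hc0
    have h' : evalP (n := 1) (fun ρ => monomialG (c ρ) 0)
        (fun κ : Fin 2 => (Dop (fun a : ℝ => (a:ℂ)) 0)^[(κ : ℕ)] Stmt8Aux.f0) = 0 := h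
    apply Stmt8Aux.vanish c hc ∅ Set.finite_empty
      (fun y0 => {y0, (Real.pi : ℂ) * y0})
      (fun y => (Set.finite_singleton _).insert _)
    intro y0 _ y1 hy1
    simp only [Set.mem_insert_iff, Set.mem_singleton_iff] at hy1
    push_neg at hy1
    obtain ⟨hy11, hy12⟩ := hy1
    have hπ1 : ((Real.pi : ℝ) : ℂ) ≠ 1 := by
      intro hcon
      apply Stmt8Aux.pi_ne_one
      exact_mod_cast hcon
    have hd : ((Real.pi : ℝ) : ℂ) - 1 ≠ 0 := sub_ne_zero.mpr hπ1
    set u : ℂ := ((Real.pi : ℂ) * y0 - y1) / ((Real.pi : ℂ) - 1) with hu_def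
    set vv : ℂ := (y1 - y0) / ((Real.pi : ℂ) - 1) with hvv_def
    have hu : u ≠ 0 :=
      div_ne_zero (sub_ne_zero.mpr (fun hh => hy12 hh.symm)) hd
    have hvv : vv ≠ 0 := div_ne_zero (sub_ne_zero.mpr hy11) hd
    obtain ⟨s, hs0, hsadd, hs1, hspi⟩ := Stmt8Aux.exists_char u vv hu hvv
    have hT := Stmt8Aux.T_evalP s hs0 hsadd c hc hvE
    rw [h'] at hT
    rw [show Stmt8Aux.T s 0 = 0 from by simp [Stmt8Aux.T],
      show ((Dop (fun a : ℝ => (a:ℂ)) 0)^[((0 : Fin 2) : ℕ)] Stmt8Aux.f0)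
        = Stmt8Aux.f0 from rfl,
      show ((Dop (fun a : ℝ => (a:ℂ)) 0)^[((1 : Fin 2) : ℕ)] Stmt8Aux.f0)
        = Dop (fun a : ℝ => (a:ℂ)) 0 Stmt8Aux.f0 from rfl,
      Stmt8Aux.T_f0, Stmt8Aux.T_Dop_eul, hs1, hspi] at hT
    have hA : u + vv = y0 := by
      rw [hu_def, hvv_def]
      field_simp
      ring
    have hB : u + (Real.pi : ℂ) * vv = y1 := by
      rw [hu_def, hvv_def]
      field_simp
      ring
    rw [hA, hB] at hT
    exact hT.symm
end

section
/- Let P ∈ ℂ[x, y₀, y₁] be a nonzero polynomial and s(x) ∈ Ω a generalized power series solution of the first-order differential equation P(x, y, y') = 0 such that dim_ℚ ⟨supp s ∪ ℚ⟩_ℚ / ℚ = 1. Then the linearized operator along s has a regular singularity at 0; concretely, ord_x (∂P/∂y₁)(x, s(x), s'(x)) − 1 ≤ ord_x (∂P/∂y₀)(x, s(x), s'(x)). -/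
open Classical Filter

namespace Stmt9Aux

abbrev H := HahnSeries ℝ ℂ

lemma omegaSupp_isPWO {f : ℝ → ℂ} (hf : OmegaSupp f) : (Function.support f).IsPWO := by
  refine Set.IsWF.isPWO ?_
  rw [Set.isWF_iff_no_descending_seq]
  intro g hg hmem
  have hsub : Set.range g ⊆ {a : ℝ | f a ≠ 0 ∧ a ≤ g 0} := by
    rintro x ⟨n, rfl⟩
    exact ⟨hmem n, hg.antitone (Nat.zero_le n)⟩
  exact Set.infinite_range_of_injective hg.injective (Set.Finite.subset (hf (g 0)) hsub)

lemma mulG_coeff (x y : H) : mulG x.coeff y.coeff = (x * y).coeff := by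
  funext a
  have hsub : (Function.support fun b => x.coeff b * y.coeff (a - b)) ⊆
      ((Finset.addAntidiagonal x.isPWO_support y.isPWO_support a).image Prod.fst : Finset ℝ) := by
    intro b hb
    rw [Function.mem_support] at hb
    have h1 : x.coeff b ≠ 0 := left_ne_zero_of_mul hb
    have h2 : y.coeff (a - b) ≠ 0 := right_ne_zero_of_mul hb
    simp only [Finset.coe_image, Set.mem_image, Finset.mem_coe, Finset.mem_addAntidiagonal]
    exact ⟨(b, a - b), Finset.mem_addAntidiagonal.2 ⟨h1, h2, by ring⟩, rfl⟩
  rw [mulG]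
  rw [finsum_eq_finset_sum_of_support_subset _ hsub, HahnSeries.coeff_mul]
  rw [Finset.sum_image ?hinj]
  case hinj =>
    intro p hp q hq hpq
    replace hp := Finset.mem_addAntidiagonal.1 hp
    replace hq := Finset.mem_addAntidiagonal.1 hq
    have h2 : p.2 = q.2 := by
      have := hp.2.2.trans hq.2.2.symm
      rw [hpq] at this
      exact add_left_cancel this
    exact Prod.ext hpq h2
  refine Finset.sum_congr rfl fun p hp => ?_
  rw [Finset.mem_addAntidiagonal] at hp
  have h : a - p.1 = p.2 := by
    have := hp.2.2
    linarith
  rw [h]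

lemma sum_coeff {ι : Type*} (T : Finset ι) (F : ι → H) (a : ℝ) :
    (∑ i ∈ T, F i).coeff a = ∑ i ∈ T, (F i).coeff a := by
  classical
  induction T using Finset.induction_on with
  | empty => simp
  | insert _ _ h ih => rw [Finset.sum_insert h, Finset.sum_insert h, HahnSeries.coeff_add, ih]

lemma nsmul_coeff (n : ℕ) (x : H) (a : ℝ) : (n • x).coeff a = n • x.coeff a := by
  induction n with
  | zero => simp
  | succ n ih => rw [succ_nsmul, succ_nsmul, HahnSeries.coeff_add, ih]

lemma oneG_coeff : oneG = (1 : H).coeff := by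
  funext a
  rw [HahnSeries.coeff_one]
  rfl

lemma powG_coeff (x : H) : ∀ k : ℕ, powG x.coeff k = (x ^ k).coeff
  | 0 => by rw [powG, pow_zero, oneG_coeff]
  | (k+1) => by rw [powG, powG_coeff x k, mulG_coeff, pow_succ']

lemma prodPow_coeff (X : Fin 2 → H) (ρ : Fin 2 →₀ ℕ) :
    prodPow (fun κ => (X κ).coeff) ρ = (X 0 ^ (ρ 0) * (X 1 ^ (ρ 1) * 1)).coeff := by
  show (List.ofFn (fun κ : Fin 2 => powG ((X κ).coeff) (ρ κ))).foldr mulG oneG = _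
  simp only [List.ofFn_succ, List.ofFn_zero, List.foldr_cons, List.foldr_nil]
  rw [oneG_coeff, powG_coeff, powG_coeff, mulG_coeff, mulG_coeff]
  norm_num

/-- The coefficients of `Q` as Hahn series. -/
noncomputable def CH (Q : PolyG 1) (hQ : ∀ ρ, (Function.support (Q ρ)).IsPWO) (ρ : Fin 2 →₀ ℕ) : H :=
  ⟨Q ρ, hQ ρ⟩

/-- The Hahn-series monomial `X₀^(σ 0) * X₁^(σ 1)` (in the shape of `prodPow`). -/
noncomputable def MonH (X : Fin 2 → H) (σ : Fin 2 →₀ ℕ) : H := X 0 ^ (σ 0) * (X 1 ^ (σ 1) * 1)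

lemma evalP_coeff (Q : PolyG 1) (T : Finset (Fin 2 →₀ ℕ)) (hT : Function.support Q ⊆ T)
    (hQ : ∀ ρ, (Function.support (Q ρ)).IsPWO) (X : Fin 2 → H) :
    evalP Q (fun κ => (X κ).coeff) =
      (∑ ρ ∈ T, CH Q hQ ρ * MonH X ρ).coeff := by
  funext a
  rw [sum_coeff]
  rw [show evalP Q (fun κ => (X κ).coeff) a
      = ∑ᶠ ρ : Fin 2 →₀ ℕ, mulG (Q ρ) (prodPow (fun κ => (X κ).coeff) ρ) a from rfl]
  have hsub : (Function.support fun ρ => mulG (Q ρ) (prodPow (fun κ => (X κ).coeff) ρ) a)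
      ⊆ (T : Set (Fin 2 →₀ ℕ)) := by
    intro ρ hρ
    rw [Function.mem_support] at hρ
    refine hT ?_
    intro hQρ
    apply hρ
    simp [mulG, hQρ]
  rw [finsum_eq_finset_sum_of_support_subset _ hsub]
  refine Finset.sum_congr rfl fun ρ _ => ?_
  have h : mulG (Q ρ) (prodPow (fun κ => (X κ).coeff) ρ)
      = (CH Q hQ ρ * MonH X ρ).coeff := by
    rw [prodPow_coeff]
    exact mulG_coeff (CH Q hQ ρ) (MonH X ρ)
  exact congrFun h a

end Stmt9Aux
namespace Stmt9Aux

def DH (Lc : ℝ → ℂ) (x : H) : H :=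
  ⟨fun a => Lc a * x.coeff a, x.isPWO_support.mono (by
    intro a ha
    rw [Function.mem_support] at ha
    exact right_ne_zero_of_mul ha)⟩

lemma DH_coeff (Lc : ℝ → ℂ) (x : H) (a : ℝ) : (DH Lc x).coeff a = Lc a * x.coeff a := rfl

variable {Lc : ℝ → ℂ}

lemma DH_add (x y : H) : DH Lc (x + y) = DH Lc x + DH Lc y := by
  ext a
  simp [DH_coeff, mul_add]

lemma DH_sum {ι : Type*} (T : Finset ι) (F : ι → H) :
    DH Lc (∑ i ∈ T, F i) = ∑ i ∈ T, DH Lc (F i) := by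
  classical
  induction T using Finset.induction_on with
  | empty => ext a; simp [DH_coeff]
  | insert _ _ h ih => rw [Finset.sum_insert h, Finset.sum_insert h, DH_add, ih]

lemma DH_mul (hadd : ∀ a b : ℝ, Lc (a + b) = Lc a + Lc b) (x y : H) :
    DH Lc (x * y) = DH Lc x * y + x * DH Lc y := by
  ext a
  rw [HahnSeries.coeff_add, DH_coeff, HahnSeries.coeff_mul]
  rw [HahnSeries.coeff_mul_left' x.isPWO_support
    (show (DH Lc x).support ⊆ x.support from fun b hb =>
      Function.mem_support.2 (right_ne_zero_of_mul (Function.mem_support.1 hb)))]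
  rw [HahnSeries.coeff_mul_right' y.isPWO_support
    (show (DH Lc y).support ⊆ y.support from fun b hb =>
      Function.mem_support.2 (right_ne_zero_of_mul (Function.mem_support.1 hb)))]
  rw [Finset.mul_sum, ← Finset.sum_add_distrib]
  refine Finset.sum_congr rfl fun ij hij => ?_
  rw [Finset.mem_addAntidiagonal] at hij
  rw [DH_coeff, DH_coeff, ← hij.2.2, hadd]
  ring

lemma DH_one (hadd : ∀ a b : ℝ, Lc (a + b) = Lc a + Lc b) : DH Lc (1 : H) = 0 := by
  have h := DH_mul hadd (1 : H) 1
  rw [mul_one, one_mul, mul_one] at h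
  exact add_eq_right.mp h.symm

lemma DH_pow (hadd : ∀ a b : ℝ, Lc (a + b) = Lc a + Lc b) (x : H) :
    ∀ n : ℕ, DH Lc (x ^ (n + 1)) = (n + 1) • (x ^ n * DH Lc x)
  | 0 => by simp
  | (n+1) => by
    rw [pow_succ', DH_mul hadd, DH_pow hadd x n, mul_smul_comm, ← mul_assoc, ← pow_succ']
    rw [mul_comm (DH Lc x) (x ^ (n+1))]
    simp only [nsmul_eq_mul, Nat.cast_add, Nat.cast_one]
    ring

lemma DH_pow' (hadd : ∀ a b : ℝ, Lc (a + b) = Lc a + Lc b) (x : H) (n : ℕ) :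
    DH Lc (x ^ n) = n • (x ^ (n - 1) * DH Lc x) := by
  cases n with
  | zero => simp [DH_one hadd]
  | succ n => rw [DH_pow hadd x n]; rfl

lemma DH_mon (hadd : ∀ a b : ℝ, Lc (a + b) = Lc a + Lc b) (c x y : H)
    (hc : DH Lc c = 0) (a b : ℕ) :
    DH Lc (c * (x ^ a * (y ^ b * 1))) =
      a • (c * (x ^ (a - 1) * (y ^ b * 1))) * DH Lc x +
      b • (c * (x ^ a * (y ^ (b - 1) * 1))) * DH Lc y := by
  simp only [mul_one]
  rw [DH_mul hadd, hc, zero_mul, zero_add, DH_mul hadd, DH_pow' hadd, DH_pow' hadd]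
  simp only [nsmul_eq_mul]
  ring

end Stmt9Aux
namespace Stmt9Aux

lemma pderiv_transfer (P : PolyG 1) (T : Finset (Fin 2 →₀ ℕ))
    (hT : ∀ ρ, ρ ∉ T → P ρ = 0)
    (hQ : ∀ ρ, (Function.support (P ρ)).IsPWO) (X : Fin 2 → H) (κ : Fin 2) :
    evalP (pderivP κ P) (fun κ' => (X κ').coeff) =
      (∑ ρ ∈ T, (ρ κ) • (CH P hQ ρ * MonH X (ρ - Finsupp.single κ 1))).coeff := by
  classical
  have hQ' : ∀ ρ, (Function.support (pderivP κ P ρ)).IsPWO := by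
    intro ρ
    refine (hQ (ρ + Finsupp.single κ 1)).mono ?_
    intro a ha
    rw [Function.mem_support] at ha ⊢
    exact right_ne_zero_of_mul ha
  set e : Fin 2 →₀ ℕ := Finsupp.single κ 1 with he
  have hT' : Function.support (pderivP κ P) ⊆
      ((T.image (fun ρ => ρ - e)) : Finset (Fin 2 →₀ ℕ)) := by
    intro ρ' hρ'
    rw [Function.mem_support] at hρ'
    have hPne : P (ρ' + e) ≠ 0 := by
      intro h0
      apply hρ'
      funext a
      show ((ρ' κ + 1 : ℕ) : ℂ) * P (ρ' + e) a = 0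
      rw [h0]
      simp
    have hmem : ρ' + e ∈ T := by
      by_contra hc
      exact hPne (hT _ hc)
    simp only [Finset.coe_image, Set.mem_image, Finset.mem_coe]
    refine ⟨ρ' + e, hmem, ?_⟩
    ext i
    simp [Finsupp.add_apply, Finsupp.tsub_apply]
  rw [evalP_coeff (pderivP κ P) (T.image (fun ρ => ρ - e)) hT' hQ' X]
  refine congrArg HahnSeries.coeff ?_
  have hCoeff : ∀ ρ', CH (pderivP κ P) hQ' ρ' = (ρ' κ + 1) • CH P hQ (ρ' + e) := by
    intro ρ'
    ext a
    rw [nsmul_coeff]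
    show ((ρ' κ + 1 : ℕ) : ℂ) * P (ρ' + e) a = (ρ' κ + 1) • ((CH P hQ (ρ' + e)).coeff a)
    rw [nsmul_eq_mul]
    rfl
  calc ∑ ρ' ∈ T.image (fun ρ => ρ - e), CH (pderivP κ P) hQ' ρ' * MonH X ρ'
      = ∑ ρ' ∈ T.image (fun ρ => ρ - e), (ρ' κ + 1) • (CH P hQ (ρ' + e) * MonH X ρ') := by
        refine Finset.sum_congr rfl fun ρ' _ => ?_
        rw [hCoeff ρ', smul_mul_assoc]
    _ = ∑ ρ' ∈ (T.filter fun ρ => ρ κ ≠ 0).image (fun ρ => ρ - e),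
          (ρ' κ + 1) • (CH P hQ (ρ' + e) * MonH X ρ') := by
        symm
        refine Finset.sum_subset (Finset.image_subset_image (Finset.filter_subset _ _)) ?_
        intro ρ' hρ'T hρ'n
        have hP0 : P (ρ' + e) = 0 := by
          by_contra hPne
          have hmem : ρ' + e ∈ T := by
            by_contra hc
            exact hPne (hT _ hc)
          apply hρ'n
          refine Finset.mem_image.2 ⟨ρ' + e, Finset.mem_filter.2 ⟨hmem, ?_⟩, ?_⟩
          · simp [he, Finsupp.add_apply, Finsupp.single_apply]
          · ext i
            simp [Finsupp.add_apply, Finsupp.tsub_apply]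
        have hz : CH P hQ (ρ' + e) = 0 := by
          ext a
          show P (ρ' + e) a = 0
          rw [hP0]
          rfl
        rw [hz, zero_mul]
        simp
    _ = ∑ ρ ∈ T.filter (fun ρ => ρ κ ≠ 0),
          ((ρ - e) κ + 1) • (CH P hQ ((ρ - e) + e) * MonH X (ρ - e)) := by
        refine Finset.sum_image ?_
        intro ρ hρ σ hσ hρσ
        rw [Finset.mem_coe, Finset.mem_filter] at hρ hσ
        have hρ2 := hρ.2
        have hσ2 := hσ.2
        have h1 : e ≤ ρ := by rw [he, Finsupp.single_le_iff]; omega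
        have h2 : e ≤ σ := by rw [he, Finsupp.single_le_iff]; omega
        calc ρ = ρ - e + e := (tsub_add_cancel_of_le h1).symm
          _ = σ - e + e := congrArg (· + e) hρσ
          _ = σ := tsub_add_cancel_of_le h2
    _ = ∑ ρ ∈ T.filter (fun ρ => ρ κ ≠ 0), (ρ κ) • (CH P hQ ρ * MonH X (ρ - e)) := by
        refine Finset.sum_congr rfl fun ρ hρ => ?_
        rw [Finset.mem_filter] at hρ
        have hρ2 := hρ.2
        have h1 : e ≤ ρ := by rw [he, Finsupp.single_le_iff]; omega
        have h2 : ρ - e + e = ρ := tsub_add_cancel_of_le h1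
        have h3 : (ρ - e) κ + 1 = ρ κ := by
          rw [he, Finsupp.tsub_apply, Finsupp.single_eq_same]
          omega
        rw [h2, h3]
    _ = ∑ ρ ∈ T, (ρ κ) • (CH P hQ ρ * MonH X (ρ - e)) := by
        refine Finset.sum_subset (Finset.filter_subset _ _) ?_
        intro ρ hρ hρn
        have h0 : ρ κ = 0 := by
          by_contra hc
          exact hρn (Finset.mem_filter.2 ⟨hρ, hc⟩)
        rw [h0]
        simp

end Stmt9Aux
namespace Stmt9Aux

lemma exists_irrational (s : ℝ → ℂ)
    (hrank : rankQuot (suppG s) (Set.range ((↑) : ℚ → ℝ)) = 1) :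
    ∃ a₀, s a₀ ≠ 0 ∧ ∀ q : ℚ, (q : ℝ) ≠ a₀ := by
  by_contra hcon
  push_neg at hcon
  have hsub : suppG s ∪ Set.range ((↑) : ℚ → ℝ) ⊆ Set.range ((↑) : ℚ → ℝ) := by
    rintro a (ha | ha)
    · obtain ⟨q, hq⟩ := hcon a ha
      exact ⟨q, hq⟩
    · exact ha
  have hle : Submodule.span ℚ (suppG s ∪ Set.range ((↑) : ℚ → ℝ))
      ≤ Submodule.span ℚ (Set.range ((↑) : ℚ → ℝ)) :=
    (Submodule.span_mono hsub).trans le_rfl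
  have htop : Submodule.comap (Submodule.span ℚ (suppG s ∪ Set.range ((↑) : ℚ → ℝ))).subtype
      (Submodule.span ℚ (Set.range ((↑) : ℚ → ℝ))) = ⊤ := by
    rw [Submodule.eq_top_iff']
    intro x
    exact hle x.2
  rw [rankQuot] at hrank
  haveI : Subsingleton
      (↥(Submodule.span ℚ (suppG s ∪ Set.range ((↑) : ℚ → ℝ))) ⧸
        Submodule.comap (Submodule.span ℚ (suppG s ∪ Set.range ((↑) : ℚ → ℝ))).subtype
          (Submodule.span ℚ (Set.range ((↑) : ℚ → ℝ)))) :=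
    Submodule.Quotient.subsingleton_iff.2 htop
  rw [rank_subsingleton'] at hrank
  exact zero_ne_one hrank

lemma exists_L (a₀ : ℝ) (hirr : ∀ q : ℚ, (q : ℝ) ≠ a₀) :
    ∃ L : ℝ →ₗ[ℚ] ℚ, L a₀ = 1 ∧ ∀ q : ℚ, L (q : ℝ) = 0 := by
  have h10 : (1 : ℝ) ≠ 0 := one_ne_zero
  have ha1 : a₀ ∉ ({1} : Set ℝ) := by
    intro h
    exact hirr 1 (by simpa using h.symm)
  have hspan : a₀ ∉ Submodule.span ℚ ({1} : Set ℝ) := by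
    intro h
    rw [Submodule.mem_span_singleton] at h
    obtain ⟨q, hq⟩ := h
    exact hirr q (by rwa [Rat.smul_one_eq_cast] at hq)
  have li : LinearIndepOn ℚ id (insert a₀ ({1} : Set ℝ)) := by
    rw [linearIndepOn_id_insert ha1]
    exact ⟨(linearIndepOn_singleton_iff ℚ).2 h10, hspan⟩
  set t := li.extend (Set.subset_univ _) with ht
  set B := Module.Basis.extend li with hB
  have hmem : a₀ ∈ t := li.subset_extend _ (Set.mem_insert _ _)
  have hmem1 : (1 : ℝ) ∈ t := li.subset_extend _ (Set.mem_insert_of_mem _ rfl)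
  refine ⟨B.coord ⟨a₀, hmem⟩, ?_, ?_⟩
  · have h1 : B ⟨a₀, hmem⟩ = a₀ := Module.Basis.extend_apply_self li ⟨a₀, hmem⟩
    have h2 := congrArg (fun z => B.repr z ⟨a₀, hmem⟩) h1
    rw [Module.Basis.coord_apply, ← h2, Module.Basis.repr_self, Finsupp.single_eq_same]
  · intro q
    have h1 : B ⟨(1:ℝ), hmem1⟩ = (1:ℝ) := Module.Basis.extend_apply_self li ⟨(1:ℝ), hmem1⟩
    have hL1 : B.coord ⟨a₀, hmem⟩ (1 : ℝ) = 0 := by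
      have h2 := congrArg (fun z => B.repr z ⟨a₀, hmem⟩) h1
      rw [Module.Basis.coord_apply, ← h2, Module.Basis.repr_self, Finsupp.single_apply, if_neg]
      intro hcon
      have : (1 : ℝ) = a₀ := congrArg Subtype.val hcon
      exact hirr 1 (by simpa using this)
    have : (q : ℝ) = q • (1 : ℝ) := by rw [Rat.smul_one_eq_cast]
    rw [this, map_smul, hL1, smul_zero]

lemma ordG_coeff (x : H) : ordG x.coeff = x.orderTop := by
  by_cases hx : x = 0
  · subst hx
    rw [ordG, if_pos (by funext a; simp), HahnSeries.orderTop_zero]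
  · rw [ordG, if_neg (by rwa [HahnSeries.coeff_fun_eq_zero_iff]), HahnSeries.orderTop_of_ne_zero hx]
    congr 1
    refine IsLeast.csInf_eq ⟨?_, ?_⟩
    · exact x.isWF_support.min_mem _
    · exact fun b hb => x.isWF_support.min_le _ hb

lemma MonH_sub0 (X : Fin 2 → H) (ρ : Fin 2 →₀ ℕ) :
    MonH X (ρ - Finsupp.single 0 1) = X 0 ^ (ρ 0 - 1) * (X 1 ^ (ρ 1) * 1) := by
  rw [MonH, Finsupp.tsub_apply, Finsupp.tsub_apply, Finsupp.single_eq_same,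
    Finsupp.single_apply, if_neg (by decide), Nat.sub_zero]

lemma MonH_sub1 (X : Fin 2 → H) (ρ : Fin 2 →₀ ℕ) :
    MonH X (ρ - Finsupp.single 1 1) = X 0 ^ (ρ 0) * (X 1 ^ (ρ 1 - 1) * 1) := by
  rw [MonH, Finsupp.tsub_apply, Finsupp.tsub_apply, Finsupp.single_eq_same,
    Finsupp.single_apply, if_neg (by decide), Nat.sub_zero]

end Stmt9Aux
/-- regular singularity of the linearized operator along a
maximal-rank solution of a first order polynomial ODE. -/
theorem stmt9 (P : PolyG 1)
    (hPfin : (Function.support P).Finite)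
    (hPpoly : ∀ ρ, (Function.support (P ρ)).Finite ∧
      ∀ a, P ρ a ≠ 0 → ∃ k : ℕ, a = (k : ℝ))
    (hP : P ≠ 0) (s : ℝ → ℂ) (hs : OmegaSupp s)
    (hsol : evalP P (fun κ : Fin 2 => (Dop (fun a => (a : ℂ)) 1)^[(κ : ℕ)] s) = 0)
    (hrank : rankQuot (suppG s) (Set.range ((↑) : ℚ → ℝ)) = 1) :
    ordG (evalP (pderivP 1 P)
        (fun κ : Fin 2 => (Dop (fun a => (a : ℂ)) 1)^[(κ : ℕ)] s)) ≤
      ordG (evalP (pderivP 0 P)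
        (fun κ : Fin 2 => (Dop (fun a => (a : ℂ)) 1)^[(κ : ℕ)] s)) + 1 := by
  classical
  obtain ⟨a₀, hs0, hirr⟩ := Stmt9Aux.exists_irrational s hrank
  obtain ⟨L, hL1, hLq⟩ := Stmt9Aux.exists_L a₀ hirr
  set Lc : ℝ → ℂ := fun a => ((L a : ℚ) : ℂ) with hLc
  have hadd : ∀ a b : ℝ, Lc (a + b) = Lc a + Lc b := by
    intro a b
    simp only [hLc, map_add, Rat.cast_add]
  have hLc1 : Lc 1 = 0 := by
    have h2 := hLq 1
    rw [Rat.cast_one] at h2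
    simp [hLc, h2]
  have hLc0 : Lc 0 = 0 := by
    simp [hLc]
  have hLca₀ : Lc a₀ = 1 := by simp [hLc, hL1]
  have hpwos : (Function.support s).IsPWO := Stmt9Aux.omegaSupp_isPWO hs
  set S0 : Stmt9Aux.H := ⟨s, hpwos⟩ with hS0
  have hpwos1 : (Function.support (Dop (fun a => (a : ℂ)) 1 s)).IsPWO := by
    refine (hpwos.image_of_monotone (f := fun b : ℝ => b - 1)
      (fun x y h => by simpa using h)).mono ?_
    intro a ha
    rw [Function.mem_support] at ha
    have hsa : s (a + 1) ≠ 0 := right_ne_zero_of_mul ha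
    exact ⟨a + 1, hsa, by ring⟩
  set S1 : Stmt9Aux.H := ⟨Dop (fun a => (a : ℂ)) 1 s, hpwos1⟩ with hS1
  set X : Fin 2 → Stmt9Aux.H := ![S0, S1] with hX
  have hv : (fun κ : Fin 2 => (Dop (fun a => (a : ℂ)) 1)^[(κ : ℕ)] s)
      = fun κ => (X κ).coeff := by
    funext κ
    fin_cases κ
    · show (Dop (fun a => (a : ℂ)) 1)^[0] s = (X 0).coeff
      rw [Function.iterate_zero]
      rfl
    · show (Dop (fun a => (a : ℂ)) 1)^[1] s = (X 1).coeff
      rw [Function.iterate_one]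
      rfl
  rw [hv] at hsol ⊢
  set T : Finset (Fin 2 →₀ ℕ) := hPfin.toFinset with hTdef
  have hQ : ∀ ρ, (Function.support (P ρ)).IsPWO := fun ρ => ((hPpoly ρ).1).isPWO
  have hTs : Function.support P ⊆ ↑T := by rw [hTdef, Set.Finite.coe_toFinset]
  have hT0 : ∀ ρ, ρ ∉ T → P ρ = 0 := by
    intro ρ h
    by_contra hne
    exact h (hPfin.mem_toFinset.2 hne)
  have hE : (∑ ρ ∈ T, Stmt9Aux.CH P hQ ρ * Stmt9Aux.MonH X ρ) = 0 := by
    rw [← HahnSeries.coeff_fun_eq_zero_iff, ← Stmt9Aux.evalP_coeff P T hTs hQ X]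
    exact hsol
  have hDHc : ∀ ρ, Stmt9Aux.DH Lc (Stmt9Aux.CH P hQ ρ) = 0 := by
    intro ρ
    ext a
    rw [Stmt9Aux.DH_coeff, HahnSeries.coeff_zero]
    show Lc a * P ρ a = 0
    by_cases hPa : P ρ a = 0
    · rw [hPa, mul_zero]
    · obtain ⟨k, rfl⟩ := (hPpoly ρ).2 a hPa
      have hk : Lc ((k : ℝ)) = 0 := by
        have h2 := hLq (k : ℚ)
        rw [show (((k : ℚ) : ℝ)) = ((k : ℝ)) by push_cast; ring] at h2
        simp [hLc, h2]
      rw [hk, zero_mul]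
  rw [Stmt9Aux.pderiv_transfer P T hT0 hQ X 1, Stmt9Aux.pderiv_transfer P T hT0 hQ X 0,
    Stmt9Aux.ordG_coeff, Stmt9Aux.ordG_coeff]
  set U : Stmt9Aux.H := Stmt9Aux.DH Lc S0 with hU
  set U' : Stmt9Aux.H := Stmt9Aux.DH Lc S1 with hU'
  set AH : Stmt9Aux.H :=
    ∑ ρ ∈ T, (ρ 0) • (Stmt9Aux.CH P hQ ρ * Stmt9Aux.MonH X (ρ - Finsupp.single 0 1)) with hAHd
  set BH : Stmt9Aux.H :=
    ∑ ρ ∈ T, (ρ 1) • (Stmt9Aux.CH P hQ ρ * Stmt9Aux.MonH X (ρ - Finsupp.single 1 1)) with hBHd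
  have hmain : AH * U + BH * U' = 0 := by
    have h0 : Stmt9Aux.DH Lc (∑ ρ ∈ T, Stmt9Aux.CH P hQ ρ * Stmt9Aux.MonH X ρ) = 0 := by
      rw [hE]
      ext a
      simp [Stmt9Aux.DH_coeff]
    rw [Stmt9Aux.DH_sum] at h0
    have hterm : ∀ ρ ∈ T, Stmt9Aux.DH Lc (Stmt9Aux.CH P hQ ρ * Stmt9Aux.MonH X ρ)
        = (ρ 0) • (Stmt9Aux.CH P hQ ρ * Stmt9Aux.MonH X (ρ - Finsupp.single 0 1)) * U
          + (ρ 1) • (Stmt9Aux.CH P hQ ρ * Stmt9Aux.MonH X (ρ - Finsupp.single 1 1)) * U' := by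
      intro ρ _
      rw [Stmt9Aux.MonH_sub0, Stmt9Aux.MonH_sub1]
      exact Stmt9Aux.DH_mon hadd (Stmt9Aux.CH P hQ ρ) (X 0) (X 1) (hDHc ρ) (ρ 0) (ρ 1)
    rw [Finset.sum_congr rfl hterm, Finset.sum_add_distrib, ← Finset.sum_mul,
      ← Finset.sum_mul] at h0
    exact h0
  have hUcoeff : ∀ a, U.coeff a = Lc a * s a := fun a => rfl
  have hU0 : U ≠ 0 := by
    intro h
    apply hs0
    have hc : U.coeff a₀ = 0 := by rw [h]; rfl
    rwa [hUcoeff, hLca₀, one_mul] at hc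
  set m : ℝ := U.order with hm
  have hUm : U.coeff m ≠ 0 := HahnSeries.coeff_order_eq_zero.not.mpr hU0
  have hm0 : m ≠ 0 := by
    intro h
    apply hUm
    rw [h, hUcoeff, hLc0, zero_mul]
  have hU'coeff : ∀ a, U'.coeff a = ((a + 1 : ℝ) : ℂ) * U.coeff (a + 1) := by
    intro a
    have h1 : U'.coeff a = Lc a * (((a + 1 : ℝ) : ℂ) * s (a + 1)) := rfl
    rw [h1, hUcoeff]
    have h2 : Lc (a + 1) = Lc a := by rw [hadd, hLc1, add_zero]
    rw [h2]
    ring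
  have hU'm : U'.coeff (m - 1) ≠ 0 := by
    rw [hU'coeff, show m - 1 + 1 = m by ring]
    exact mul_ne_zero (Complex.ofReal_ne_zero.mpr hm0) hUm
  have hU'0 : U' ≠ 0 := HahnSeries.ne_zero_of_coeff_ne_zero hU'm
  have hU'ord : U'.order = m - 1 := by
    refine le_antisymm (HahnSeries.order_le_of_coeff_ne_zero hU'm) ?_
    by_contra hlt
    push_neg at hlt
    apply HahnSeries.coeff_order_eq_zero.not.mpr hU'0
    rw [hU'coeff]
    have hlt2 : U'.order + 1 < U.order := by rw [← hm]; linarith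
    rw [HahnSeries.coeff_eq_zero_of_lt_order hlt2, mul_zero]
  by_cases hBH : BH = 0
  · have hAH : AH = 0 := by
      have hz : AH * U = 0 := by rwa [hBH, zero_mul, add_zero] at hmain
      rcases mul_eq_zero.mp hz with h | h
      · exact h
      · exact absurd h hU0
    rw [hAH, hBH, HahnSeries.orderTop_zero]
    simp
  · have hBU' : BH * U' ≠ 0 := mul_ne_zero hBH hU'0
    have hAU : AH * U = -(BH * U') := eq_neg_of_add_eq_zero_left hmain
    have hAH : AH ≠ 0 := by
      intro h
      apply hBU'
      rw [h, zero_mul] at hAU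
      exact neg_eq_zero.mp hAU.symm
    have hords : AH.order + U.order = BH.order + U'.order := by
      have h1 := congrArg HahnSeries.order hAU
      rwa [HahnSeries.order_neg, HahnSeries.order_mul hAH hU0,
        HahnSeries.order_mul hBH hU'0] at h1
    rw [hU'ord, ← hm] at hords
    have hord : BH.order = AH.order + 1 := by linarith
    rw [← HahnSeries.order_eq_orderTop_of_ne_zero hBH, ← HahnSeries.order_eq_orderTop_of_ne_zero hAH,
      hord]
    have hcast : ((AH.order + 1 : ℝ) : WithTop ℝ) = (AH.order : WithTop ℝ) + 1 := by
      push_cast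
      ring
    rw [hcast]
end
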